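/- arXiv:1702.01744 — 7 statements merged into one kernel-verified Lean document; each statement's English description precedes it below -/
import Mathlib

section
/- For integers n ≥ 2 and 2 ≤ k ≤ n−1, the number of forests on vertex set {1,…,n} consisting of k−1 rooted trees with roots 1,…,k−1 in which vertex n is a descendant of vertex 1 equals n times the number of forests on {1,…,n} consisting of k rooted trees with roots 1,…,k in which vertex n is a descendant of vertex 1. -/
/-- `p` is the parent function of a rooted forest on `Fin n` whose roots are
exactly the vertices `0, …, k-1` (representing labels `1, …, k`): the fixed
points of `p` are exactly the roots, and every vertex eventually reaches a root. -/
def IsRootedForest (n k : ℕ) (p : Fin n → Fin n) : Prop :=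
  (∀ v, p v = v ↔ v.val < k) ∧ ∀ v, ∃ m, ((p^[m]) v).val < k

namespace ForestRec

variable {n : ℕ}

lemma iter_transfer {f g : Fin n → Fin n} {D : Fin n → Prop}
    (hfg : ∀ x, ¬ D x → g x = f x) :
    ∀ {m : ℕ} {x : Fin n}, (∀ i, i < m → ¬ D (f^[i] x)) → g^[m] x = f^[m] x := by
  intro m
  induction m with
  | zero => intro x _; rfl
  | succ m ih =>
    intro x h
    rw [Function.iterate_succ_apply, Function.iterate_succ_apply,
      hfg x (by simpa using h 0 (Nat.succ_pos m))]
    exact ih fun i hi => by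
      have h2 := h (i + 1) (by omega)
      rwa [Function.iterate_succ_apply] at h2

lemma hit_or_transfer {f g : Fin n → Fin n} {D : Fin n → Prop}
    (hfg : ∀ x, ¬ D x → g x = f x) (m : ℕ) (x : Fin n) :
    (∃ i, g^[i] x = f^[i] x ∧ D (f^[i] x)) ∨
      (g^[m] x = f^[m] x ∧ ∀ i, i ≤ m → ¬ D (f^[i] x)) := by
  classical
  by_cases h : ∃ i, D (f^[i] x)
  · left
    exact ⟨Nat.find h, iter_transfer hfg fun j hj => Nat.find_min h hj, Nat.find_spec h⟩
  · right
    push_neg at h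
    exact ⟨iter_transfer hfg fun i _ => h _, fun i _ => h i⟩

lemma periodic_fixed {K : ℕ} {f : Fin n → Fin n} (hf : IsRootedForest n K f)
    {x : Fin n} {c : ℕ} (hc : 0 < c) (hx : f^[c] x = x) : f x = x := by
  obtain ⟨m, hm⟩ := hf.2 x
  have hfix : f (f^[m] x) = f^[m] x := (hf.1 _).2 hm
  have h1 : ∀ N, f^[c * N] x = x := fun N => by
    rw [Function.iterate_mul]; exact Function.iterate_fixed hx N
  have h2 : m ≤ c * (m + 1) := by
    calc m ≤ m + 1 := Nat.le_succ m
    _ ≤ c * (m + 1) := Nat.le_mul_of_pos_left _ hc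
  have h3 : f^[c * (m + 1)] x = f^[m] x := by
    have h4 := Function.iterate_add_apply f (c * (m + 1) - m) m x
    rw [Nat.sub_add_cancel h2] at h4
    rw [h4]
    exact Function.iterate_fixed hfix _
  have hx' : x = f^[m] x := by rw [← h3, h1]
  rw [hx']
  exact hfix

lemma not_return {K : ℕ} {f : Fin n → Fin n} (hf : IsRootedForest n K f)
    {x : Fin n} (hx : f x ≠ x) {i : ℕ} (hi : 0 < i) : f^[i] x ≠ x :=
  fun h => hx (periodic_fixed hf hi h)

lemma avoid_fixed {f : Fin n → Fin n} {x w z : Fin n} (hw : f w = w) (hzf : f z = z)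
    (hwz : w ≠ z) {m : ℕ} (hm : f^[m] x = z) : ∀ i, f^[i] x ≠ w := by
  intro i hi
  rcases le_or_gt i m with h | h
  · have h4 := Function.iterate_add_apply f (m - i) i x
    rw [Nat.sub_add_cancel h, hi, hm, Function.iterate_fixed hw] at h4
    exact hwz h4.symm
  · have h4 := Function.iterate_add_apply f (i - m) m x
    rw [Nat.sub_add_cancel h.le, hm, Function.iterate_fixed hzf, hi] at h4
    exact hwz h4

lemma upd_fix {α : Type*} [DecidableEq α] (q : α → α) (r : α) (h : q r = r) :
    Function.update q r r = q := by
  funext x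
  rcases eq_or_ne x r with rfl | hx
  · rw [Function.update_self, h]
  · rw [Function.update_of_ne hx]

lemma algB1 {α : Type*} [DecidableEq α] (p : α → α) (r t : α) (h : t ≠ r) :
    Function.update (Function.update (Function.update (Function.update p t (p r)) r r) r
      ((Function.update (Function.update p t (p r)) r r) t)) t (p t) = p := by
  funext x
  rcases eq_or_ne x t with rfl | hxt
  · rw [Function.update_self]
  · rw [Function.update_of_ne hxt]
    rcases eq_or_ne x r with rfl | hxr
    · rw [Function.update_self, Function.update_of_ne h, Function.update_self]
    · rw [Function.update_of_ne hxr, Function.update_of_ne hxr, Function.update_of_ne hxt]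

lemma algB2 {α : Type*} [DecidableEq α] (q : α → α) (r t v : α) (h : t ≠ r) (hq : q r = r) :
    Function.update (Function.update (Function.update (Function.update q r (q t)) t v) t
      ((Function.update (Function.update q r (q t)) t v) r)) r r = q := by
  funext x
  rcases eq_or_ne x r with rfl | hxr
  · rw [Function.update_self]; exact hq.symm
  · rw [Function.update_of_ne hxr]
    rcases eq_or_ne x t with rfl | hxt
    · rw [Function.update_self, Function.update_of_ne (Ne.symm h), Function.update_self]
    · rw [Function.update_of_ne hxt, Function.update_of_ne hxt, Function.update_of_ne hxr]

lemma lemA1 {K : ℕ} {p : Fin n → Fin n} {r t z : Fin n}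
    (hr : r.val = K) (ht : K < t.val) (hz : z.val = 0) (hK : 0 < K)
    (hp : IsRootedForest n K p) (hpz : ∃ m, p^[m] t = z) (hpr : ∀ i, p^[i] t ≠ r) :
    IsRootedForest n (K + 1) (Function.update p r r) ∧
      (∃ m, (Function.update p r r)^[m] t = z) ∧
      (∀ i, (Function.update p r r)^[i] (p r) ≠ r) := by
  classical
  set q := Function.update p r r with hqdef
  have hqr : q r = r := Function.update_self _ _ _
  have hqo : ∀ x, ¬(x = r) → q x = p x := fun x hx => Function.update_of_ne hx _ _
  have hprr : p r ≠ r := fun hh => by have := (hp.1 r).1 hh; omega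
  have hfix : ∀ x, q x = x ↔ x.val < K + 1 := by
    intro x
    rcases eq_or_ne x r with rfl | hxr
    · exact ⟨fun _ => by omega, fun _ => hqr⟩
    · have hxK : x.val ≠ K := fun hh => hxr (Fin.ext (hh.trans hr.symm))
      rw [hqo x hxr, hp.1 x]
      omega
  have hroot : ∀ x, ∃ m, ((q^[m]) x).val < K + 1 := by
    intro x
    obtain ⟨m, hm⟩ := hp.2 x
    rcases hit_or_transfer (f := p) (g := q) hqo m x with ⟨i, hgi, hDi⟩ | ⟨hgm, _⟩
    · exact ⟨i, by rw [hgi, hDi, hr]; omega⟩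
    · exact ⟨m, by rw [hgm]; omega⟩
  obtain ⟨mz, hmz⟩ := hpz
  have hbz : q^[mz] t = z := by
    rw [iter_transfer (f := p) (g := q) hqo (fun i _ => hpr i)]
    exact hmz
  refine ⟨⟨hfix, hroot⟩, ⟨mz, hbz⟩, ?_⟩
  intro i hi
  have hex : ∃ j, q^[j] (p r) = r := ⟨i, hi⟩
  have hj : q^[Nat.find hex] (p r) = r := Nat.find_spec hex
  have hpj : p^[Nat.find hex] (p r) = r := by
    rw [iter_transfer (f := q) (g := p) (fun x hx => (hqo x hx).symm)
      (fun l hl => Nat.find_min hex hl)]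
    exact hj
  have h4 : p^[Nat.find hex + 1] r = r := by
    rw [Function.iterate_succ_apply]; exact hpj
  exact hprr (periodic_fixed hp (Nat.succ_pos _) h4)

lemma lemA2 {K : ℕ} {q : Fin n → Fin n} {v r t z : Fin n}
    (hr : r.val = K) (ht : K < t.val) (hz : z.val = 0) (hK : 0 < K)
    (hq : IsRootedForest n (K + 1) q) (hqz : ∃ m, q^[m] t = z) (hqv : ∀ i, q^[i] v ≠ r) :
    IsRootedForest n K (Function.update q r v) ∧
      (∃ m, (Function.update q r v)^[m] t = z) ∧
      (∀ i, (Function.update q r v)^[i] t ≠ r) := by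
  classical
  set p := Function.update q r v with hpdef
  have hpr : p r = v := Function.update_self _ _ _
  have hpo : ∀ x, ¬(x = r) → p x = q x := fun x hx => Function.update_of_ne hx _ _
  have hvr : v ≠ r := by have := hqv 0; rwa [Function.iterate_zero_apply] at this
  have hqrf : q r = r := (hq.1 r).2 (by omega)
  have hqzf : q z = z := (hq.1 z).2 (by omega)
  have hrz : r ≠ z := fun hh => by rw [hh, hz] at hr; omega
  obtain ⟨mt, hmt⟩ := hqz
  have htr : ∀ i, q^[i] t ≠ r := avoid_fixed hqrf hqzf hrz hmt
  have hfix : ∀ x, p x = x ↔ x.val < K := by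
    intro x
    rcases eq_or_ne x r with rfl | hxr
    · rw [hpr]
      exact ⟨fun hh => absurd hh hvr, fun hh => absurd hh (by omega)⟩
    · have hxK : x.val ≠ K := fun hh => hxr (Fin.ext (hh.trans hr.symm))
      rw [hpo x hxr, hq.1 x]
      omega
  have hroot : ∀ x, ∃ m, ((p^[m]) x).val < K := by
    intro x
    obtain ⟨m, hm⟩ := hq.2 x
    rcases hit_or_transfer (f := q) (g := p) hpo m x with ⟨i, hgi, hDi⟩ | ⟨hgm, havd⟩
    · obtain ⟨mv, hmv⟩ := hq.2 v
      have hvt : p^[mv] v = q^[mv] v := iter_transfer (f := q) (g := p) hpo (fun l _ => hqv l)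
      refine ⟨mv + (i + 1), ?_⟩
      have e1 : p^[i+1] x = v := by
        rw [Function.iterate_succ_apply', hgi, hDi, hpr]
      rw [Function.iterate_add_apply, e1, hvt]
      have h5 : (q^[mv] v).val ≠ K := fun hh => hqv mv (Fin.ext (hh.trans hr.symm))
      omega
    · refine ⟨m, ?_⟩
      rw [hgm]
      have h5 : (q^[m] x).val ≠ K := fun hh => havd m le_rfl (Fin.ext (hh.trans hr.symm))
      omega
  have hbz : p^[mt] t = z := by
    rw [iter_transfer (f := q) (g := p) hpo (fun i _ => htr i)]
    exact hmt
  refine ⟨⟨hfix, hroot⟩, ⟨mt, hbz⟩, ?_⟩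
  intro i hi
  have hex : ∃ j, p^[j] t = r := ⟨i, hi⟩
  have hpj : q^[Nat.find hex] t = r := by
    rw [iter_transfer (f := p) (g := q) (fun x hx => (hpo x hx).symm)
      (fun l hl => Nat.find_min hex hl)]
    exact Nat.find_spec hex
  exact htr _ hpj

lemma lemB1 {K : ℕ} {p : Fin n → Fin n} {r t z : Fin n}
    (hr : r.val = K) (ht : K < t.val) (hz : z.val = 0) (hK : 0 < K)
    (hp : IsRootedForest n K p) (hpz : ∃ m, p^[m] t = z) (hpr : ∃ i, p^[i] t = r) :
    IsRootedForest n (K + 1) (Function.update (Function.update p t (p r)) r r) ∧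
      (∃ m, (Function.update (Function.update p t (p r)) r r)^[m] t = z) ∧
      (∃ i, (Function.update (Function.update p t (p r)) r r)^[i] (p t) = r) := by
  classical
  set q := Function.update (Function.update p t (p r)) r r with hqdef
  have hrt : r ≠ t := fun hh => by rw [hh] at hr; omega
  have hqr : q r = r := Function.update_self _ _ _
  have hqt : q t = p r := by
    rw [hqdef, Function.update_of_ne (Ne.symm hrt), Function.update_self]
  have hqo : ∀ x, ¬(x = r ∨ x = t) → q x = p x := by
    intro x hx; push_neg at hx
    rw [hqdef, Function.update_of_ne hx.1, Function.update_of_ne hx.2]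
  have hptt : p t ≠ t := fun hh => by have := (hp.1 t).1 hh; omega
  have hprr : p r ≠ r := fun hh => by have := (hp.1 r).1 hh; omega
  have hm0' := hpr
  have hm0 : p^[Nat.find hm0'] t = r := Nat.find_spec hm0'
  set m0 := Nat.find hm0' with hm0def
  have hm0min : ∀ l, l < m0 → p^[l] t ≠ r := fun l hl => Nat.find_min hm0' hl
  have hm0pos : 0 < m0 := by
    rcases Nat.eq_zero_or_pos m0 with hzero | h
    · exfalso
      rw [hzero, Function.iterate_zero_apply] at hm0
      rw [hm0] at ht; omega
    · exact h
  obtain ⟨mz, hmz⟩ := hpz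
  have hpzf : p z = z := (hp.1 z).2 (by omega)
  have hm0mz : m0 < mz := by
    by_contra hh
    push_neg at hh
    have h4 := Function.iterate_add_apply p (m0 - mz) mz t
    rw [Nat.sub_add_cancel hh, hmz, Function.iterate_fixed hpzf, hm0] at h4
    rw [h4] at hr; omega
  have hS1 : ∀ j, m0 < j → p^[j] t ≠ r ∧ p^[j] t ≠ t := by
    intro j hj
    constructor
    · intro hh
      have h4 := Function.iterate_add_apply p (j - m0) m0 t
      rw [Nat.sub_add_cancel hj.le, hm0, hh] at h4
      exact hprr (periodic_fixed hp (by omega) h4.symm)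
    · exact not_return hp hptt (by omega)
  have hprnt : p r ≠ t := by
    intro hh
    have h4 : p^[m0+1] t = t := by rw [Function.iterate_succ_apply', hm0, hh]
    exact not_return hp hptt (Nat.succ_pos m0) h4
  have hc : q^[m0 - 1] (p t) = r := by
    have havoid : ∀ i, i < m0 - 1 → ¬(p^[i] (p t) = r ∨ p^[i] (p t) = t) := by
      intro i hi
      have he : p^[i] (p t) = p^[i+1] t := (Function.iterate_succ_apply p i t).symm
      rw [he]
      rintro (hh | hh)
      · exact hm0min (i+1) (by omega) hh
      · exact not_return hp hptt (Nat.succ_pos i) hh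
    rw [iter_transfer (f := p) (g := q) hqo havoid]
    have h5 : p^[m0] t = p^[m0 - 1] (p t) := by
      conv_lhs => rw [show m0 = m0 - 1 + 1 from by omega]
      rw [Function.iterate_succ_apply]
    rw [← h5]; exact hm0
  have h5 : p^[m0+1] t = p r := by rw [Function.iterate_succ_apply', hm0]
  have hb : q^[(mz - (m0+1)) + 1] t = z := by
    have havoid : ∀ i, i < mz - (m0+1) → ¬(p^[i] (p r) = r ∨ p^[i] (p r) = t) := by
      intro i hi
      have he : p^[i] (p r) = p^[i + (m0+1)] t := by
        rw [Function.iterate_add_apply, h5]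
      rw [he]
      rintro (h6 | h6)
      · exact (hS1 (i + (m0+1)) (by omega)).1 h6
      · exact (hS1 (i + (m0+1)) (by omega)).2 h6
    rw [Function.iterate_succ_apply, hqt,
      iter_transfer (f := p) (g := q) hqo havoid]
    have h7 := Function.iterate_add_apply p (mz - (m0+1)) (m0+1) t
    rw [Nat.sub_add_cancel (by omega : m0 + 1 ≤ mz), h5] at h7
    rw [← h7]; exact hmz
  have hfix : ∀ x, q x = x ↔ x.val < K + 1 := by
    intro x
    rcases eq_or_ne x r with rfl | hxr
    · exact ⟨fun _ => by omega, fun _ => hqr⟩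
    rcases eq_or_ne x t with rfl | hxt
    · rw [hqt]
      exact ⟨fun hh => absurd hh hprnt, fun hh => absurd hh (by omega)⟩
    · have hxK : x.val ≠ K := fun hh => hxr (Fin.ext (hh.trans hr.symm))
      rw [hqo x (by push_neg; exact ⟨hxr, hxt⟩), hp.1 x]
      omega
  have hroot : ∀ x, ∃ m, ((q^[m]) x).val < K + 1 := by
    intro x
    obtain ⟨m, hm⟩ := hp.2 x
    rcases hit_or_transfer (f := p) (g := q) hqo m x with ⟨i, hgi, hDi⟩ | ⟨hgm, _⟩
    · rcases hDi with hh | hh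
      · exact ⟨i, by rw [hgi, hh, hr]; omega⟩
      · refine ⟨(mz - (m0+1)) + 1 + i, ?_⟩
        rw [Function.iterate_add_apply, hgi, hh, hb, hz]
        omega
    · exact ⟨m, by rw [hgm]; omega⟩
  exact ⟨⟨hfix, hroot⟩, ⟨_, hb⟩, ⟨_, hc⟩⟩

lemma lemB2 {K : ℕ} {q : Fin n → Fin n} {v r t z : Fin n}
    (hr : r.val = K) (ht : K < t.val) (hz : z.val = 0) (hK : 0 < K)
    (hq : IsRootedForest n (K + 1) q) (hqz : ∃ m, q^[m] t = z) (hqv : ∃ i, q^[i] v = r) :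
    IsRootedForest n K (Function.update (Function.update q r (q t)) t v) ∧
      (∃ m, (Function.update (Function.update q r (q t)) t v)^[m] t = z) ∧
      (∃ i, (Function.update (Function.update q r (q t)) t v)^[i] t = r) := by
  classical
  set p := Function.update (Function.update q r (q t)) t v with hpdef
  have hrt : r ≠ t := fun hh => by rw [hh] at hr; omega
  have hpt : p t = v := Function.update_self _ _ _
  have hpr : p r = q t := by
    rw [hpdef, Function.update_of_ne hrt, Function.update_self]
  have hpo : ∀ x, ¬(x = r ∨ x = t) → p x = q x := by
    intro x hx; push_neg at hx
    rw [hpdef, Function.update_of_ne hx.2, Function.update_of_ne hx.1]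
  have hqr : q r = r := (hq.1 r).2 (by omega)
  have hqzf : q z = z := (hq.1 z).2 (by omega)
  have hrz : r ≠ z := fun hh => by rw [hh, hz] at hr; omega
  obtain ⟨mt, hmt⟩ := hqz
  have htr : ∀ i, q^[i] t ≠ r := avoid_fixed hqr hqzf hrz hmt
  have hqtt : q t ≠ t := fun hh => by have := (hq.1 t).1 hh; omega
  have hmv' := hqv
  have hmv : q^[Nat.find hmv'] v = r := Nat.find_spec hmv'
  set mv := Nat.find hmv' with hmvdef
  have hmvmin : ∀ l, l < mv → q^[l] v ≠ r := fun l hl => Nat.find_min hmv' hl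
  have hvavoid : ∀ i, i < mv → ¬(q^[i] v = r ∨ q^[i] v = t) := by
    rintro i hi (hh | hh)
    · exact hmvmin i hi hh
    · apply htr (mv - i)
      have h4 := Function.iterate_add_apply q (mv - i) i v
      rw [Nat.sub_add_cancel hi.le, hh] at h4
      rw [← h4]; exact hmv
  have hvt : v ≠ t := fun hh => htr mv (by rw [← hh]; exact hmv)
  have hc1 : p^[mv] v = r := by
    rw [iter_transfer (f := q) (g := p) hpo hvavoid]; exact hmv
  have hmtpos : 0 < mt := by
    rcases Nat.eq_zero_or_pos mt with hzero | h
    · exfalso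
      rw [hzero, Function.iterate_zero_apply] at hmt
      rw [hmt, hz] at ht; omega
    · exact h
  have hc2 : p^[mt - 1] (q t) = z := by
    have havoid : ∀ i, i < mt - 1 → ¬(q^[i] (q t) = r ∨ q^[i] (q t) = t) := by
      intro i hi
      have he : q^[i] (q t) = q^[i+1] t := (Function.iterate_succ_apply q i t).symm
      rw [he]
      rintro (hh | hh)
      · exact htr (i+1) hh
      · exact not_return hq hqtt (Nat.succ_pos i) hh
    rw [iter_transfer (f := q) (g := p) hpo havoid]
    have h5 : q^[mt] t = q^[mt - 1] (q t) := by
      conv_lhs => rw [show mt = mt - 1 + 1 from by omega]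
      rw [Function.iterate_succ_apply]
    rw [← h5]; exact hmt
  have hreachr : p^[mv + 1] t = r := by
    rw [Function.iterate_add_apply, Function.iterate_one, hpt]; exact hc1
  have hreachz : p^[(mt - 1) + 1 + (mv + 1)] t = z := by
    rw [Function.iterate_add_apply, hreachr, Function.iterate_add_apply,
      Function.iterate_one, hpr]
    exact hc2
  have hfix : ∀ x, p x = x ↔ x.val < K := by
    intro x
    rcases eq_or_ne x t with rfl | hxt
    · rw [hpt]
      exact ⟨fun hh => absurd hh hvt, fun hh => absurd hh (by omega)⟩
    rcases eq_or_ne x r with rfl | hxr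
    · rw [hpr]
      constructor
      · intro hh
        exact absurd (by rw [← Function.iterate_one q] at hh; exact hh) (htr 1)
      · intro hh; exact absurd hh (by omega)
    · have hxK : x.val ≠ K := fun hh => hxr (Fin.ext (hh.trans hr.symm))
      rw [hpo x (by push_neg; exact ⟨hxr, hxt⟩), hq.1 x]
      omega
  have hroot : ∀ x, ∃ m, ((p^[m]) x).val < K := by
    intro x
    obtain ⟨m, hm⟩ := hq.2 x
    rcases hit_or_transfer (f := q) (g := p) hpo m x with ⟨i, hgi, hDi⟩ | ⟨hgm, havd⟩
    · rcases hDi with hh | hh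
      · refine ⟨(mt - 1) + 1 + i, ?_⟩
        rw [Function.iterate_add_apply, hgi, hh, Function.iterate_add_apply,
          Function.iterate_one, hpr, hc2, hz]
        omega
      · refine ⟨(mt - 1) + 1 + (mv + 1) + i, ?_⟩
        rw [Function.iterate_add_apply, hgi, hh, hreachz, hz]
        omega
    · refine ⟨m, ?_⟩
      rw [hgm]
      have h6 := havd m le_rfl
      push_neg at h6
      have h5 : (q^[m] x).val ≠ K := fun hh => h6.1 (Fin.ext (hh.trans hr.symm))
      omega
  exact ⟨⟨hfix, hroot⟩, ⟨_, hreachz⟩, ⟨_, hreachr⟩⟩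

end ForestRec

theorem forest_recursion (n k : ℕ) (hn : 2 ≤ n) (hk : 2 ≤ k) (hk' : k ≤ n - 1) :
    Nat.card {p : Fin n → Fin n // IsRootedForest n (k - 1) p ∧
        ∃ m, p^[m] ⟨n - 1, by omega⟩ = ⟨0, by omega⟩} =
    n * Nat.card {p : Fin n → Fin n // IsRootedForest n k p ∧
        ∃ m, p^[m] ⟨n - 1, by omega⟩ = ⟨0, by omega⟩} := by
  classical
  obtain ⟨K, rfl⟩ : ∃ K, k = K + 1 := ⟨k - 1, by omega⟩
  have hK : 0 < K := by omega
  set t : Fin n := ⟨n - 1, by omega⟩ with htdef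
  set z : Fin n := ⟨0, by omega⟩ with hzdef
  set r : Fin n := ⟨K, by omega⟩ with hrdef
  have hr : r.val = K := rfl
  have ht : K < t.val := by
    have h1 : t.val = n - 1 := rfl
    omega
  have hz : z.val = 0 := rfl
  have hrt' : t ≠ r := fun hh => by rw [hh] at ht; omega
  have e : {p : Fin n → Fin n // IsRootedForest n K p ∧ ∃ m, p^[m] t = z} ≃
      (Fin n × {p : Fin n → Fin n // IsRootedForest n (K + 1) p ∧ ∃ m, p^[m] t = z}) := by
    refine
      { toFun := fun pp =>
          if h : ∃ i, (pp.1)^[i] t = r then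
            ⟨pp.1 t, ⟨Function.update (Function.update pp.1 t (pp.1 r)) r r,
              (ForestRec.lemB1 hr ht hz hK pp.2.1 pp.2.2 h).1,
              (ForestRec.lemB1 hr ht hz hK pp.2.1 pp.2.2 h).2.1⟩⟩
          else
            ⟨pp.1 r, ⟨Function.update pp.1 r r,
              (ForestRec.lemA1 hr ht hz hK pp.2.1 pp.2.2 (not_exists.mp h)).1,
              (ForestRec.lemA1 hr ht hz hK pp.2.1 pp.2.2 (not_exists.mp h)).2.1⟩⟩
        invFun := fun vq =>
          if h : ∃ i, (vq.2.1)^[i] vq.1 = r then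
            ⟨Function.update (Function.update vq.2.1 r (vq.2.1 t)) t vq.1,
              (ForestRec.lemB2 hr ht hz hK vq.2.2.1 vq.2.2.2 h).1,
              (ForestRec.lemB2 hr ht hz hK vq.2.2.1 vq.2.2.2 h).2.1⟩
          else
            ⟨Function.update vq.2.1 r vq.1,
              (ForestRec.lemA2 hr ht hz hK vq.2.2.1 vq.2.2.2 (not_exists.mp h)).1,
              (ForestRec.lemA2 hr ht hz hK vq.2.2.1 vq.2.2.2 (not_exists.mp h)).2.1⟩
        left_inv := ?_
        right_inv := ?_ }
    · rintro ⟨p, hp1, hp2⟩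
      by_cases hcase : ∃ i, p^[i] t = r
      · have hB := ForestRec.lemB1 hr ht hz hK hp1 hp2 hcase
        simp only [dif_pos hcase]
        have h2 : ∃ i, (Function.update (Function.update p t (p r)) r r)^[i] (p t) = r :=
          hB.2.2
        simp only [dif_pos h2]
        exact Subtype.ext (ForestRec.algB1 p r t hrt')
      · have hA := ForestRec.lemA1 hr ht hz hK hp1 hp2 (not_exists.mp hcase)
        simp only [dif_neg hcase]
        have h2 : ¬ ∃ i, (Function.update p r r)^[i] (p r) = r := by
          rintro ⟨i, hi⟩; exact hA.2.2 i hi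
        simp only [dif_neg h2]
        apply Subtype.ext
        show Function.update (Function.update p r r) r (p r) = p
        rw [Function.update_idem]
        exact Function.update_eq_self r p
    · rintro ⟨v, q, hq1, hq2⟩
      by_cases hcase : ∃ i, q^[i] v = r
      · have hB := ForestRec.lemB2 hr ht hz hK hq1 hq2 hcase
        simp only [dif_pos hcase]
        have h2 : ∃ i, (Function.update (Function.update q r (q t)) t v)^[i] t = r :=
          hB.2.2
        simp only [dif_pos h2]
        have hqr : q r = r := (hq1.1 r).2 (by omega)
        exact Prod.ext (Function.update_self _ _ _)
          (Subtype.ext (ForestRec.algB2 q r t v hrt' hqr))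
      · have hA := ForestRec.lemA2 hr ht hz hK hq1 hq2 (not_exists.mp hcase)
        simp only [dif_neg hcase]
        have h2 : ¬ ∃ i, (Function.update q r v)^[i] t = r := by
          rintro ⟨i, hi⟩; exact hA.2.2 i hi
        simp only [dif_neg h2]
        have hqr : q r = r := (hq1.1 r).2 (by omega)
        refine Prod.ext (Function.update_self _ _ _) (Subtype.ext ?_)
        show Function.update (Function.update q r v) r r = q
        rw [Function.update_idem]
        exact ForestRec.upd_fix q r hqr
  have hgoal : Nat.card {p : Fin n → Fin n // IsRootedForest n K p ∧ ∃ m, p^[m] t = z} =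
      n * Nat.card {p : Fin n → Fin n // IsRootedForest n (K + 1) p ∧ ∃ m, p^[m] t = z} := by
    rw [Nat.card_congr e, Nat.card_prod, Nat.card_eq_fintype_card, Fintype.card_fin]
  simp only [Nat.add_sub_cancel]
  exact hgoal
end

section
/- For 1 ≤ k ≤ n−1, the number of forests on {1,…,n} consisting of k rooted trees with roots exactly 1,…,k, in which vertex n is a descendant of vertex 1, equals n^(n−k−1). -/
open Function Set

section Iterate

variable {α : Type*} {f g : α → α} {x : α}

theorem iterate_eq_of_apply_iterate_eq (h : ∀ n, g (f^[n] x) = f (f^[n] x)) (n : ℕ) :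
    g^[n] x = f^[n] x := by
  induction n with
  | zero => rfl
  | succ n ih => rw [iterate_succ_apply', iterate_succ_apply', ih, h]

theorem exists_iterate_mem_periodicPts [Finite α] (f : α → α) (x : α) :
    ∃ m, f^[m] x ∈ periodicPts f := by
  have key : ∀ a b, a < b → f^[a] x = f^[b] x → ∃ m, f^[m] x ∈ periodicPts f :=
    fun a b hab h ↦ ⟨a, mk_mem_periodicPts (n := b - a) (by omega) <| by
      rw [IsPeriodicPt, IsFixedPt, ← iterate_add_apply, Nat.sub_add_cancel hab.le, h]⟩
  obtain ⟨a, b, hne, h⟩ := Finite.exists_ne_map_eq_of_infinite (fun n : ℕ ↦ f^[n] x)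
  rcases hne.lt_or_gt with hab | hab
  exacts [key a b hab h, key b a hab h.symm]

theorem mem_of_iterate_mem_of_mem_periodicPts {s : Set α} (hs : MapsTo f s s)
    (hx : x ∈ periodicPts f) {m : ℕ} (hm : f^[m] x ∈ s) : x ∈ s := by
  obtain ⟨n, hn, hper⟩ := mem_periodicPts.mp hx
  have hback : f^[n * m - m] (f^[m] x) = x := by
    rw [← iterate_add_apply, Nat.sub_add_cancel (Nat.le_mul_of_pos_left m hn)]
    exact hper.mul_const m
  exact hback ▸ hs.iterate _ hm

theorem subset_periodicPts_of_mapsTo_of_injOn {s : Set α} (hs : s.Finite) (hmaps : MapsTo f s s)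
    (hinj : InjOn f s) : s ⊆ periodicPts f := by
  have : Finite s := hs.to_subtype
  intro x hx
  have hsemi : Semiconj Subtype.val (hmaps.restrict f s s) f := fun _ ↦ rfl
  exact hsemi.mapsTo_periodicPts ((hmaps.restrict_inj.mpr hinj).mem_periodicPts ⟨x, hx⟩)

end Iterate

section Redirect

variable {α : Type*} [DecidableEq α] {K W : List α} {f g : α → α} {v : α}

def redirect (K W : List α) (g : α → α) (v : α) : α :=
  if v ∈ K then W.getD (K.idxOf v) v else g v

theorem redirect_of_notMem (h : v ∉ K) : redirect K W g v = g v := if_neg h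

theorem redirect_getElem (hK : K.Nodup) {i : ℕ} (hi : i < K.length) (hW : i < W.length) :
    redirect K W g K[i] = W[i] := by
  rw [redirect, if_pos (List.getElem_mem hi), hK.idxOf_getElem, List.getD_eq_getElem]

theorem redirect_map_of_mem (h : v ∈ K) : redirect K (K.map f) g v = f v := by
  have hi := List.idxOf_lt_length_iff.mpr h
  rw [redirect, if_pos h, List.getD_eq_getElem _ _ (by simpa using hi), List.getElem_map,
    List.getElem_idxOf]

theorem iterate_redirect_cons {a b : α} {L : List α} (hK : (a :: L).Nodup) {i : ℕ}
    (hi : i < L.length + 2) :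
    (redirect (a :: L) (L ++ [b]) g)^[i] a = (a :: (L ++ [b]))[i]'(by simp; omega) := by
  induction i with
  | zero => rfl
  | succ i ih =>
    rw [iterate_succ_apply', ih (by omega)]
    have hkey : (a :: (L ++ [b]))[i]'(by simp; omega) = (a :: L)[i]'(by simp; omega) := by
      rcases i with _ | i
      · rfl
      · simp [List.getElem_append_left (show i < L.length by simp at hi; omega)]
    rw [hkey, redirect_getElem hK _ (by simp; omega)]
    rfl

end Redirect

section ParentMap

variable {V : Type*} {R : Finset V} {p : V → V} {v : V}

structure IsParentMap (R : Finset V) (p : V → V) : Prop where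
  apply_eq_self_iff : ∀ v, p v = v ↔ v ∈ R
  exists_iterate_mem : ∀ v, ∃ m, p^[m] v ∈ R

noncomputable def depth (R : Finset V) (p : V → V) (v : V) : ℕ := sInf {m | p^[m] v ∈ R}

noncomputable def ancestors (R : Finset V) (p : V → V) (v : V) : List V :=
  List.iterate p (p v) (depth R p v - 1)

theorem iterate_notMem_of_lt_depth {i : ℕ} (hi : i < depth R p v) : p^[i] v ∉ R :=
  Nat.notMem_of_lt_sInf hi

theorem depth_eq {n : ℕ} (hn : p^[n] v ∈ R) (hlt : ∀ i < n, p^[i] v ∉ R) :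
    depth R p v = n :=
  le_antisymm (Nat.sInf_le hn)
    (not_lt.mp fun h ↦ hlt _ h (Nat.sInf_mem (s := {m | p^[m] v ∈ R}) ⟨n, hn⟩))

namespace IsParentMap

variable (hp : IsParentMap R p)
include hp

theorem iterate_depth_mem (v : V) : p^[depth R p v] v ∈ R :=
  Nat.sInf_mem (hp.exists_iterate_mem v)

theorem depth_pos (hv : v ∉ R) : 0 < depth R p v :=
  Nat.pos_of_ne_zero fun h ↦ hv (by simpa [h] using hp.iterate_depth_mem v)

theorem iterate_eq_of_depth_le {m : ℕ} (hm : depth R p v ≤ m) :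
    p^[m] v = p^[depth R p v] v := by
  rw [← Nat.sub_add_cancel hm, iterate_add_apply,
    iterate_fixed ((hp.apply_eq_self_iff _).mpr (hp.iterate_depth_mem v))]

theorem iterate_depth_eq {r : V} (hr : r ∈ R) {m : ℕ} (hm : p^[m] v = r) :
    p^[depth R p v] v = r := by
  rcases lt_or_ge m (depth R p v) with h | h
  · exact absurd (hm ▸ hr) (iterate_notMem_of_lt_depth h)
  · rw [← hp.iterate_eq_of_depth_le h, hm]

theorem iterate_ne_iterate {i j : ℕ} (hij : i < j) (hj : j ≤ depth R p v) :
    p^[i] v ≠ p^[j] v := by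
  intro h
  have hroot : p^[depth R p v - j + i] v ∈ R := by
    rw [iterate_add_apply, h, ← iterate_add_apply, Nat.sub_add_cancel hj]
    exact hp.iterate_depth_mem v
  exact iterate_notMem_of_lt_depth (by omega) hroot

theorem nodup_ancestors : (ancestors R p v).Nodup := by
  refine List.pairwise_iff_getElem.mpr fun i j hi hj hij ↦ ?_
  simp only [ancestors, List.getElem_iterate, ← iterate_succ_apply, List.length_iterate]
    at hi hj ⊢
  exact hp.iterate_ne_iterate (by omega) (by omega)

end IsParentMap

theorem getElem_ancestors {i : ℕ} (hi : i < (ancestors R p v).length) :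
    (ancestors R p v)[i] = p^[i + 1] v := by
  simp [ancestors, iterate_succ_apply]

theorem length_ancestors : (ancestors R p v).length = depth R p v - 1 := by
  simp [ancestors]

theorem notMem_of_mem_ancestors {w : V} (hw : w ∈ ancestors R p v) : w ∉ R := by
  obtain ⟨i, hi, rfl⟩ := List.mem_iff_getElem.mp hw
  rw [getElem_ancestors]
  exact iterate_notMem_of_lt_depth (by rw [length_ancestors] at hi; omega)

theorem IsParentMap.ne_of_mem_ancestors (hp : IsParentMap R p) {w : V}
    (hw : w ∈ ancestors R p v) : w ≠ v := by
  obtain ⟨i, hi, rfl⟩ := List.mem_iff_getElem.mp hw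
  rw [getElem_ancestors]
  exact (hp.iterate_ne_iterate (i := 0) (by omega)
    (by rw [length_ancestors] at hi; omega)).symm

theorem getElem_cons_ancestors {i : ℕ} (hi : i < (v :: ancestors R p v).length) :
    (v :: ancestors R p v)[i] = p^[i] v := by
  rcases i with _ | i
  · rfl
  · exact getElem_ancestors _

theorem IsParentMap.map_cons_ancestors (hp : IsParentMap R p) (hv : v ∉ R) :
    (v :: ancestors R p v).map p = ancestors R p v ++ [p^[depth R p v] v] := by
  have hd := hp.depth_pos hv
  refine List.ext_getElem (by simp [length_ancestors]) fun i h₁ h₂ ↦ ?_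
  rw [List.getElem_map, getElem_cons_ancestors, ← iterate_succ_apply' p, List.getElem_append]
  split_ifs with h
  · rw [getElem_ancestors]
  · simp only [List.length_map, List.length_cons, length_ancestors] at h₁ h
    simp only [List.getElem_singleton]
    congr 1
    omega

end ParentMap

section Joyal

variable {V : Type*} [LinearOrder V] {R : Finset V} {ℓ r v : V} {p f : V → V}

noncomputable def pathToCycles (R : Finset V) (ℓ r : V) (p : V → V) : V → V :=
  redirect (ℓ :: (ancestors R p ℓ).toFinset.sort) (r :: ancestors R p ℓ) p

theorem pathToCycles_of_ne_of_notMem (hℓ : v ≠ ℓ) (hv : v ∉ ancestors R p ℓ) :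
    pathToCycles R ℓ r p v = p v :=
  redirect_of_notMem (by simp [hℓ, hv])

namespace IsParentMap

variable (hp : IsParentMap R p)
include hp

theorem nodup_cons_sort_ancestors : (ℓ :: (ancestors R p ℓ).toFinset.sort).Nodup :=
  List.nodup_cons.mpr
    ⟨by simpa using fun h ↦ hp.ne_of_mem_ancestors h rfl, Finset.sort_nodup _ _⟩

theorem pathToCycles_of_mem (hℓ : ℓ ∉ R) (hv : v ∈ R) : pathToCycles R ℓ r p v = v := by
  rw [pathToCycles_of_ne_of_notMem (ne_of_mem_of_not_mem hv hℓ)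
    (fun h ↦ notMem_of_mem_ancestors h hv), (hp.apply_eq_self_iff v).mpr hv]

theorem pathToCycles_self : pathToCycles R ℓ r p ℓ = r :=
  redirect_getElem (i := 0) hp.nodup_cons_sort_ancestors (by simp) (by simp)

theorem map_sort_pathToCycles :
    (ancestors R p ℓ).toFinset.sort.map (pathToCycles R ℓ r p) = ancestors R p ℓ := by
  have hlen : (ancestors R p ℓ).toFinset.sort.length = (ancestors R p ℓ).length := by
    rw [Finset.length_sort, List.toFinset_card_of_nodup hp.nodup_ancestors]
  refine List.ext_getElem (by rw [List.length_map, hlen]) fun i h₁ h₂ ↦ ?_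
  rw [List.getElem_map]
  exact redirect_getElem (i := i + 1) hp.nodup_cons_sort_ancestors (by simp_all)
    (by simpa using h₂)

end IsParentMap

variable [Fintype V]

open scoped Classical in
noncomputable def cyclicPts (R : Finset V) (f : V → V) : Finset V :=
  {v | v ∉ R ∧ v ∈ periodicPts f}

noncomputable def cycleList (R : Finset V) (f : V → V) : List V :=
  (cyclicPts R f).sort.map f

noncomputable def cyclesToPath (R : Finset V) (ℓ r : V) (f : V → V) : V → V :=
  redirect (ℓ :: cycleList R f) (cycleList R f ++ [r]) f

theorem cyclesToPath_of_notMem (hv : v ∉ ℓ :: cycleList R f) :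
    cyclesToPath R ℓ r f v = f v :=
  redirect_of_notMem hv

theorem mem_cyclicPts : v ∈ cyclicPts R f ↔ v ∉ R ∧ v ∈ periodicPts f := by
  simp [cyclicPts]

theorem nodup_cycleList : (cycleList R f).Nodup :=
  (Finset.sort_nodup _ _).map_on fun _ hx _ hy ↦ (bijOn_periodicPts (f := f)).injOn
    (mem_cyclicPts.mp ((Finset.mem_sort _).mp hx)).2
    (mem_cyclicPts.mp ((Finset.mem_sort _).mp hy)).2

theorem IsParentMap.cyclicPts_pathToCycles (hp : IsParentMap R p) (hℓ : ℓ ∉ R)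
    (hr : r ∈ R) : cyclicPts R (pathToCycles R ℓ r p) = (ancestors R p ℓ).toFinset := by
  set f := pathToCycles R ℓ r p with hf
  set S := (ancestors R p ℓ).toFinset
  have hmap := hp.map_sort_pathToCycles (ℓ := ℓ) (r := r)
  have hmaps : MapsTo f S S := fun v hv ↦ by
    rw [Finset.mem_coe, List.mem_toFinset, ← hmap]
    exact List.mem_map_of_mem ((Finset.mem_sort _).mpr hv)
  have hinj : InjOn f S := fun v hv w hw ↦
    List.inj_on_of_nodup_map (hmap ▸ hp.nodup_ancestors) ((Finset.mem_sort _).mpr hv)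
      ((Finset.mem_sort _).mpr hw)
  have hSR : MapsTo f (S ∪ R : Set V) (S ∪ R : Set V) := by
    rintro v (hv | hv)
    · exact Or.inl (hmaps hv)
    · exact Or.inr (by rw [hf, hp.pathToCycles_of_mem hℓ hv]; exact hv)
  ext v
  rw [mem_cyclicPts]
  constructor
  · rintro ⟨hvR, hper⟩
    by_contra hvS
    have hout : ∀ n, f^[n] v ∉ (S ∪ R : Set V) := fun n hn ↦
      (mem_of_iterate_mem_of_mem_periodicPts hSR hper hn).elim hvS hvR
    have hagree : ∀ n, p (f^[n] v) = f (f^[n] v) := fun n ↦ by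
      refine (pathToCycles_of_ne_of_notMem (fun h ↦ hout (n + 1) (Or.inr ?_))
        (fun h ↦ hout n (Or.inl (List.mem_toFinset.mpr h)))).symm
      rw [iterate_succ_apply', h, hf, hp.pathToCycles_self]
      exact hr
    obtain ⟨m, hm⟩ := hp.exists_iterate_mem v
    exact hout m (Or.inr (iterate_eq_of_apply_iterate_eq hagree m ▸ hm))
  · intro hv
    exact ⟨notMem_of_mem_ancestors (List.mem_toFinset.mp hv),
      subset_periodicPts_of_mapsTo_of_injOn S.finite_toSet hmaps hinj hv⟩

theorem IsParentMap.cyclesToPath_pathToCycles (hp : IsParentMap R p) (hℓ : ℓ ∉ R)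
    (hr : r ∈ R) (hℓr : ∃ m, p^[m] ℓ = r) : cyclesToPath R ℓ r (pathToCycles R ℓ r p) = p := by
  have hcycle : cycleList R (pathToCycles R ℓ r p) = ancestors R p ℓ := by
    rw [cycleList, hp.cyclicPts_pathToCycles hℓ hr, hp.map_sort_pathToCycles]
  have hpath : ancestors R p ℓ ++ [r] = (ℓ :: ancestors R p ℓ).map p := by
    rw [hp.map_cons_ancestors hℓ, hp.iterate_depth_eq hr hℓr.choose_spec]
  funext v
  rw [cyclesToPath, hcycle, hpath]
  by_cases hv : v ∈ ℓ :: ancestors R p ℓ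
  · exact redirect_map_of_mem hv
  · rw [redirect_of_notMem hv]
    exact pathToCycles_of_ne_of_notMem (List.ne_of_not_mem_cons hv)
      (List.not_mem_of_not_mem_cons hv)

end Joyal

section CyclesToPath

variable {V : Type*} [LinearOrder V] [Fintype V] {R : Finset V} {ℓ r v : V} {f : V → V}
  (hf : ∀ v ∈ R, f v = v)
include hf

theorem iterate_notMem_of_mem_cyclicPts (hv : v ∈ cyclicPts R f) (m : ℕ) : f^[m] v ∉ R :=
  fun h ↦ (mem_cyclicPts.mp hv).1 <| mem_of_iterate_mem_of_mem_periodicPts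
    (fun w hw ↦ (hf w hw).symm ▸ hw) (mem_cyclicPts.mp hv).2 h

theorem mapsTo_cyclicPts : MapsTo f (cyclicPts R f) (cyclicPts R f) := fun _ hv ↦
  mem_cyclicPts.mpr ⟨iterate_notMem_of_mem_cyclicPts hf hv 1,
    (bijOn_periodicPts (f := f)).mapsTo (mem_cyclicPts.mp hv).2⟩

theorem toFinset_cycleList : (cycleList R f).toFinset = cyclicPts R f := by
  refine Finset.eq_of_subset_of_card_le (fun v hv ↦ ?_) ?_
  · obtain ⟨w, hw, rfl⟩ := List.mem_map.mp (List.mem_toFinset.mp hv)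
    exact mapsTo_cyclicPts hf ((Finset.mem_sort _).mp hw)
  · rw [List.toFinset_card_of_nodup nodup_cycleList, cycleList, List.length_map,
      Finset.length_sort]

theorem mem_cycleList : v ∈ cycleList R f ↔ v ∈ cyclicPts R f := by
  rw [← List.mem_toFinset, toFinset_cycleList hf]

variable (hfℓ : f ℓ = r) (hr : r ∈ R)
include hfℓ hr

theorem nodup_cons_cycleList : (ℓ :: cycleList R f).Nodup :=
  List.nodup_cons.mpr ⟨fun h ↦ iterate_notMem_of_mem_cyclicPts hf ((mem_cycleList hf).mp h) 1
    (by rwa [iterate_one, hfℓ]), nodup_cycleList⟩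

theorem iterate_cyclesToPath {i : ℕ} (hi : i < (cycleList R f).length + 2) :
    (cyclesToPath R ℓ r f)^[i] ℓ = (ℓ :: (cycleList R f ++ [r]))[i]'(by simp; omega) :=
  iterate_redirect_cons (nodup_cons_cycleList hf hfℓ hr) hi

theorem exists_iterate_cyclesToPath_eq (hv : v ∈ ℓ :: cycleList R f) :
    ∃ n, (cyclesToPath R ℓ r f)^[n] v = r := by
  obtain ⟨i, hi, rfl⟩ := List.getElem_of_mem hv
  have hpath : (ℓ :: cycleList R f)[i] = (cyclesToPath R ℓ r f)^[i] ℓ := by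
    rw [iterate_cyclesToPath hf hfℓ hr (by simp at hi; omega)]
    rcases i with _ | i
    · rfl
    · simp [List.getElem_append_left (show i < (cycleList R f).length by simp at hi; omega)]
  refine ⟨(cycleList R f).length + 1 - i, ?_⟩
  rw [hpath, ← iterate_add_apply, Nat.sub_add_cancel (by simp at hi; omega),
    iterate_cyclesToPath hf hfℓ hr (by omega)]
  simp

theorem isParentMap_cyclesToPath (hℓ : ℓ ∉ R) : IsParentMap R (cyclesToPath R ℓ r f) where
  apply_eq_self_iff v := by
    constructor
    · intro hfix
      by_cases hv : v ∈ ℓ :: cycleList R f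
      · obtain ⟨n, hn⟩ := exists_iterate_cyclesToPath_eq hf hfℓ hr hv
        rw [iterate_fixed hfix] at hn
        exact hn ▸ hr
      · by_contra hvR
        rw [cyclesToPath_of_notMem hv] at hfix
        refine hv (List.mem_cons_of_mem _ ((mem_cycleList hf).mpr ?_))
        exact mem_cyclicPts.mpr ⟨hvR, mk_mem_periodicPts one_pos hfix⟩
    · intro hv
      have hkey : v ∉ ℓ :: cycleList R f := by
        rw [List.mem_cons, mem_cycleList hf, mem_cyclicPts]
        rintro (rfl | h)
        exacts [hℓ hv, h.1 hv]
      rw [cyclesToPath_of_notMem hkey, hf v hv]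
  exists_iterate_mem v := by
    by_contra! hout
    set g := cyclesToPath R ℓ r f
    have hkey : ∀ n, g^[n] v ∉ ℓ :: cycleList R f := fun n hn ↦ by
      obtain ⟨m, hm⟩ := exists_iterate_cyclesToPath_eq hf hfℓ hr hn
      exact hout (m + n) (by rw [iterate_add_apply, hm]; exact hr)
    have hagree : ∀ n, f (g^[n] v) = g (g^[n] v) := fun n ↦
      (cyclesToPath_of_notMem (hkey n)).symm
    obtain ⟨a, ha⟩ := exists_iterate_mem_periodicPts f v
    rw [iterate_eq_of_apply_iterate_eq hagree a] at ha
    exact hkey a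
      (List.mem_cons_of_mem _ ((mem_cycleList hf).mpr (mem_cyclicPts.mpr ⟨hout a, ha⟩)))

theorem depth_cyclesToPath (hℓ : ℓ ∉ R) :
    depth R (cyclesToPath R ℓ r f) ℓ = (cycleList R f).length + 1 := by
  refine depth_eq (by rw [iterate_cyclesToPath hf hfℓ hr (by omega)]; simpa using hr)
    fun i hi ↦ ?_
  rw [iterate_cyclesToPath hf hfℓ hr (by omega)]
  rcases i with _ | i
  · exact hℓ
  · rw [List.getElem_cons_succ, List.getElem_append_left (by omega)]
    exact (mem_cyclicPts.mp ((mem_cycleList hf).mp (List.getElem_mem _))).1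

theorem ancestors_cyclesToPath (hℓ : ℓ ∉ R) :
    ancestors R (cyclesToPath R ℓ r f) ℓ = cycleList R f := by
  refine List.ext_getElem (by simp [length_ancestors, depth_cyclesToPath hf hfℓ hr hℓ])
    fun i h₁ h₂ ↦ ?_
  rw [getElem_ancestors, iterate_cyclesToPath hf hfℓ hr (by omega), List.getElem_cons_succ,
    List.getElem_append_left h₂]

theorem pathToCycles_cyclesToPath (hℓ : ℓ ∉ R) :
    pathToCycles R ℓ r (cyclesToPath R ℓ r f) = f := by
  have hvals : r :: cycleList R f = (ℓ :: (cyclicPts R f).sort).map f := by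
    simp [cycleList, hfℓ]
  funext v
  rw [pathToCycles, ancestors_cyclesToPath hf hfℓ hr hℓ, toFinset_cycleList hf, hvals]
  by_cases hv : v ∈ ℓ :: (cyclicPts R f).sort
  · exact redirect_map_of_mem hv
  · rw [redirect_of_notMem hv, cyclesToPath_of_notMem]
    simpa [mem_cycleList hf] using hv

end CyclesToPath

theorem card_fun_fixing_and_apply_eq {V : Type*} [Fintype V] [DecidableEq V] {R : Finset V}
    {ℓ : V} (r : V) (hℓ : ℓ ∉ R) :
    Nat.card {f : V → V // (∀ v ∈ R, f v = v) ∧ f ℓ = r} =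
      Fintype.card V ^ (Fintype.card V - R.card - 1) := by
  let t : V → Finset V := fun v ↦ if v = ℓ then {r} else if v ∈ R then {v} else Finset.univ
  have hcard : ∀ v, (t v).card = if v ∈ insert ℓ R then 1 else Fintype.card V := fun v ↦ by
    by_cases h₁ : v = ℓ <;> by_cases h₂ : v ∈ R <;> simp [t, h₁, h₂]
  have ht : ∀ f : V → V, ((∀ v ∈ R, f v = v) ∧ f ℓ = r) ↔ f ∈ Fintype.piFinset t :=
    fun f ↦ by
      simp only [Fintype.mem_piFinset, t]
      constructor
      · rintro ⟨hR, hℓr⟩ v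
        split_ifs with h₁ h₂ <;> simp_all
      · intro h
        refine ⟨fun v hv ↦ ?_, by simpa using h ℓ⟩
        simpa [ne_of_mem_of_not_mem hv hℓ, hv] using h v
  rw [Nat.card_congr (Equiv.subtypeEquivRight ht), Nat.card_eq_fintype_card, Fintype.card_coe,
    Fintype.card_piFinset, Finset.prod_congr rfl fun v _ ↦ hcard v, Finset.prod_ite,
    Finset.prod_const_one, one_mul, Finset.prod_const, Finset.filter_not,
    Finset.filter_mem_eq_inter, Finset.univ_inter, ← Finset.compl_eq_univ_sdiff,
    Finset.card_compl, Finset.card_insert_of_notMem hℓ, Nat.sub_sub]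

noncomputable def pathToCyclesEquiv {V : Type*} [LinearOrder V] [Fintype V] {R : Finset V}
    {ℓ r : V} (hℓ : ℓ ∉ R) (hr : r ∈ R) :
    {p : V → V // IsParentMap R p ∧ ∃ m, p^[m] ℓ = r} ≃
      {f : V → V // (∀ v ∈ R, f v = v) ∧ f ℓ = r} where
  toFun p :=
    ⟨pathToCycles R ℓ r p, fun _ ↦ p.2.1.pathToCycles_of_mem hℓ, p.2.1.pathToCycles_self⟩
  invFun f := ⟨cyclesToPath R ℓ r f, isParentMap_cyclesToPath f.2.1 f.2.2 hr hℓ,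
    exists_iterate_cyclesToPath_eq f.2.1 f.2.2 hr List.mem_cons_self⟩
  left_inv p := Subtype.ext (p.2.1.cyclesToPath_pathToCycles hℓ hr p.2.2)
  right_inv f := Subtype.ext (pathToCycles_cyclesToPath f.2.1 f.2.2 hr hℓ)

theorem card_isParentMap_iterate_eq {V : Type*} [LinearOrder V] [Fintype V] {R : Finset V}
    {ℓ r : V} (hℓ : ℓ ∉ R) (hr : r ∈ R) :
    Nat.card {p : V → V // IsParentMap R p ∧ ∃ m, p^[m] ℓ = r} =
      Fintype.card V ^ (Fintype.card V - R.card - 1) := by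
  rw [Nat.card_congr (pathToCyclesEquiv hℓ hr), card_fun_fixing_and_apply_eq r hℓ]

theorem card_forest_n_desc_one (n k : ℕ) (hk : 1 ≤ k) (hk' : k ≤ n - 1) :
    Nat.card {p : Fin n → Fin n // IsRootedForest n k p ∧
        ∃ m, p^[m] ⟨n - 1, by omega⟩ = ⟨0, by omega⟩} = n ^ (n - k - 1) := by
  set R := Finset.Iio (⟨k, by omega⟩ : Fin n)
  have hR : ∀ v, v ∈ R ↔ v.val < k := fun v ↦ by simp [R, Fin.lt_def]
  have hforest : ∀ p, IsRootedForest n k p ↔ IsParentMap R p := fun p ↦ by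
    simp only [IsRootedForest, ← hR]
    exact ⟨fun ⟨h₁, h₂⟩ ↦ ⟨h₁, h₂⟩, fun ⟨h₁, h₂⟩ ↦ ⟨h₁, h₂⟩⟩
  rw [Nat.card_congr (Equiv.subtypeEquivRight fun p ↦ and_congr_left' (hforest p)),
    card_isParentMap_iterate_eq (by simp [hR]; omega) (by simp [hR]; omega), Fintype.card_fin,
    Fin.card_Iio]
end

section
/- For 1 ≤ k ≤ n, the number of forests on {1,…,n} consisting of k rooted trees with roots exactly the vertices 1,…,k equals k · n^(n−k−1) (interpreting the case k = n as giving 1). -/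
open Function

namespace ForestAux
open scoped Classical
variable {n : ℕ}

/-- Iterates of an updated function agree with original as long as orbit avoids the point. -/
lemma iter_update {p : Fin n → Fin n} {a b v : Fin n} :
    ∀ {m : ℕ}, (∀ j < m, p^[j] v ≠ a) → (Function.update p a b)^[m] v = p^[m] v := by
  intro m
  induction m generalizing v with
  | zero => intro _; rfl
  | succ m ih =>
    intro h
    rw [Function.iterate_succ_apply, Function.iterate_succ_apply]
    have hv : v ≠ a := by simpa using h 0 (Nat.succ_pos m)
    rw [Function.update_of_ne hv]
    exact ih (fun j hj => by
      have := h (j+1) (Nat.succ_lt_succ hj)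
      simpa [Function.iterate_succ_apply] using this)

lemma exists_first {p : Fin n → Fin n} {a v : Fin n} (h : ∃ m, p^[m] v = a) :
    ∃ m, (∀ j < m, p^[j] v ≠ a) ∧ p^[m] v = a := by
  classical
  refine ⟨Nat.find h, fun j hj => ?_, Nat.find_spec h⟩
  exact Nat.find_min h hj

/-- In a forest, any periodic point is a root. -/
lemma cycle_root {k : ℕ} {p : Fin n → Fin n} (hp : IsRootedForest n k p)
    {v : Fin n} {m : ℕ} (hm : 0 < m) (hv : p^[m] v = v) : v.val < k := by
  obtain ⟨t, ht⟩ := hp.2 v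
  have hfix : p (p^[t] v) = p^[t] v := (hp.1 _).2 ht
  have h1 : p^[m * t + m] v = v := by
    have : ∀ j, p^[m * j] v = v := by
      intro j
      induction j with
      | zero => rfl
      | succ j ih => rw [Nat.mul_succ, Function.iterate_add_apply, hv, ih]
    have := this (t + 1); rwa [Nat.mul_add, Nat.mul_one] at this
  have h2 : p^[m * t + m] v = p^[t] v := by
    have hle : t ≤ m * t := Nat.le_mul_of_pos_left t hm
    have : m * t + m = (m * t + m - t) + t := by omega
    rw [this, Function.iterate_add_apply]
    exact Function.iterate_fixed hfix _
  rw [← h2, h1] at ht; exact ht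


section Cut
variable {k : ℕ} (hkn : k < n)

/-- the vertex `k`. -/
def vk (hkn : k < n) : Fin n := ⟨k, hkn⟩

lemma forward_forest {p : Fin n → Fin n} (hp : IsRootedForest n k p) :
    IsRootedForest n (k+1) (Function.update p (vk hkn) (vk hkn)) := by
  constructor
  · intro v
    rcases eq_or_ne v (vk hkn) with rfl | hv
    · simp [vk]
    · rw [Function.update_of_ne hv, hp.1 v]
      have : v.val ≠ k := fun h => hv (Fin.ext h)
      omega
  · intro v
    obtain ⟨t, ht⟩ := hp.2 v
    by_cases h : ∃ j, j ≤ t ∧ p^[j] v = vk hkn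
    · obtain ⟨j0, hj0, hj0e⟩ := exists_first ⟨h.choose, h.choose_spec.2⟩
      refine ⟨j0, ?_⟩
      rw [iter_update hj0, hj0e]
      simp [vk]
    · push_neg at h
      refine ⟨t, ?_⟩
      rw [iter_update (fun j hj => h j (le_of_lt hj))]
      omega

lemma forward_w {p : Fin n → Fin n} (hp : IsRootedForest n k p) :
    ¬ ∃ m, (Function.update p (vk hkn) (vk hkn))^[m] (p (vk hkn)) = vk hkn := by
  rintro ⟨m, hm⟩
  have hw : p (vk hkn) ≠ vk hkn := by
    intro h
    have := (hp.1 (vk hkn)).1 h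
    simp [vk] at this
  -- translate to p
  have h' : ∃ m, p^[m] (p (vk hkn)) = vk hkn := by
    by_contra hc
    push_neg at hc
    have : (Function.update p (vk hkn) (vk hkn))^[m] (p (vk hkn)) = p^[m] (p (vk hkn)) :=
      iter_update (fun j _ => hc j)
    rw [this] at hm; exact hc m hm
  obtain ⟨m0, hm0n, hm0⟩ := exists_first h'
  have hcyc : p^[m0 + 1] (vk hkn) = vk hkn := by
    rw [Function.iterate_add_apply]
    simpa using hm0
  have := cycle_root hp (Nat.succ_pos m0) hcyc
  simp [vk] at this

lemma backward_forest {q : Fin n → Fin n} (hq : IsRootedForest n (k+1) q)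
    {w : Fin n} (hw : ¬ ∃ m, q^[m] w = vk hkn) :
    IsRootedForest n k (Function.update q (vk hkn) w) := by
  have hwk : w ≠ vk hkn := fun h => hw ⟨0, h⟩
  set p := Function.update q (vk hkn) w with hpdef
  have hnever : ∀ m, q^[m] w ≠ vk hkn := by push_neg at hw; exact hw
  -- w reaches roots < k under p
  have reachW : ∃ t, ((p^[t]) w).val < k := by
    obtain ⟨t, ht⟩ := hq.2 w
    refine ⟨t, ?_⟩
    rw [hpdef, iter_update (fun j _ => hnever j)]
    have : q^[t] w ≠ vk hkn := hnever t
    have : (q^[t] w).val ≠ k := fun h => this (Fin.ext h)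
    omega
  constructor
  · intro v
    rcases eq_or_ne v (vk hkn) with rfl | hv
    · constructor
      · intro h; exact absurd (by simpa [hpdef] using h) hwk
      · intro h; simp [vk] at h
    · rw [hpdef, Function.update_of_ne hv, hq.1 v]
      have : v.val ≠ k := fun h => hv (Fin.ext h)
      omega
  · intro v
    obtain ⟨t, ht⟩ := hq.2 v
    by_cases h : ∃ j, j ≤ t ∧ q^[j] v = vk hkn
    · obtain ⟨j0, hj0n, hj0⟩ := exists_first ⟨h.choose, h.choose_spec.2⟩
      obtain ⟨tw, htw⟩ := reachW
      refine ⟨j0 + 1 + tw, ?_⟩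
      have e1 : p^[j0] v = vk hkn := by rw [hpdef, iter_update hj0n]; exact hj0
      have e2 : p^[j0 + 1] v = w := by
        rw [Function.iterate_succ_apply', e1]
        simp [hpdef]
      have : p^[j0 + 1 + tw] v = p^[tw] w := by
        rw [Nat.add_comm (j0+1) tw, Function.iterate_add_apply, e2]
      rw [this]; exact htw
    · push_neg at h
      refine ⟨t, ?_⟩
      rw [hpdef, iter_update (fun j hj => h j (le_of_lt hj))]
      have : q^[t] v ≠ vk hkn := h t le_rfl
      have : (q^[t] v).val ≠ k := fun hh => this (Fin.ext hh)
      omega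


/-- The cut-the-edge-above-`vk` equivalence. -/
noncomputable def cutEquiv :
    {p : Fin n → Fin n // IsRootedForest n k p} ≃
      Σ q : {q : Fin n → Fin n // IsRootedForest n (k+1) q},
        {w : Fin n // ¬ ∃ m, (q.1)^[m] w = vk hkn} where
  toFun p := ⟨⟨Function.update p.1 (vk hkn) (vk hkn), forward_forest hkn p.2⟩,
    ⟨p.1 (vk hkn), by simpa using forward_w hkn p.2⟩⟩
  invFun qw := ⟨Function.update qw.1.1 (vk hkn) qw.2.1, backward_forest hkn qw.1.2 qw.2.2⟩
  left_inv p := by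
    apply Subtype.ext
    simp only [Function.update_idem]
    exact Function.update_eq_self _ _
  right_inv := by
    rintro ⟨⟨q, hq⟩, ⟨w, hw⟩⟩
    have hqvk : q (vk hkn) = vk hkn := (hq.1 _).2 (by simp [vk])
    have h1 : Function.update (Function.update q (vk hkn) w) (vk hkn) (vk hkn) = q := by
      have h0 := Function.update_eq_self (vk hkn) q
      rw [hqvk] at h0
      rw [Function.update_idem]
      exact h0
    refine Sigma.ext (Subtype.ext h1) ?_
    have hpred : ∀ x : Fin n,
        (¬ ∃ m, (Function.update (Function.update q (vk hkn) w) (vk hkn) (vk hkn))^[m] x = vk hkn)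
          ↔ ¬ ∃ m, q^[m] x = vk hkn := by
      intro x; rw [h1]
    rw [Subtype.heq_iff_coe_eq hpred]
    simp
end Cut

/-- conjugation iterate formula -/
lemma conj_iter (σ : Equiv.Perm (Fin n)) (p : Fin n → Fin n) (m : ℕ) (v : Fin n) :
    (σ ∘ p ∘ σ.symm)^[m] v = σ (p^[m] (σ.symm v)) := by
  induction m generalizing v with
  | zero => simp
  | succ m ih =>
    rw [Function.iterate_succ_apply, Function.iterate_succ_apply]
    simp only [Function.comp_apply]
    rw [ih]
    simp

lemma conj_forest {k : ℕ} (σ : Equiv.Perm (Fin n))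
    (hσ : ∀ v : Fin n, ((σ v).val < k ↔ v.val < k))
    {p : Fin n → Fin n} (hp : IsRootedForest n k p) :
    IsRootedForest n k (σ ∘ p ∘ σ.symm) := by
  constructor
  · intro v
    have : (σ ∘ p ∘ σ.symm) v = v ↔ p (σ.symm v) = σ.symm v := by
      simp only [Function.comp_apply]
      constructor
      · intro h
        have := congrArg σ.symm h
        simpa using this
      · intro h; rw [h]; simp
    rw [this, hp.1 (σ.symm v)]
    have := hσ (σ.symm v); simp at this
    omega
  · intro v
    obtain ⟨m, hm⟩ := hp.2 (σ.symm v)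
    exact ⟨m, by rw [conj_iter]; exact (hσ _).2 hm⟩

/-- swap preserves root set -/
lemma swap_root_lt {k : ℕ} {i j : Fin n} (hi : i.val < k) (hj : j.val < k) (v : Fin n) :
    ((Equiv.swap i j) v).val < k ↔ v.val < k := by
  rcases eq_or_ne v i with rfl | hvi
  · simp [Equiv.swap_apply_left, hi, hj]
  rcases eq_or_ne v j with rfl | hvj
  · simp [Equiv.swap_apply_right, hi, hj]
  · rw [Equiv.swap_apply_of_ne_of_ne hvi hvj]

/-- conjugation as an involutive map on forests -/
lemma conj_involutive (σ : Equiv.Perm (Fin n)) (hσ : σ.symm = σ) :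
    Function.Involutive (fun p : Fin n → Fin n => σ ∘ p ∘ σ.symm) := by
  intro p
  funext v
  have h2 : ∀ x, σ (σ x) = x := fun x => by
    nth_rewrite 2 [← hσ]
    exact σ.apply_symm_apply x
  simp [hσ, h2]


/-- uniqueness of the root reached -/
lemma root_unique {k : ℕ} {p : Fin n → Fin n} (hp : IsRootedForest n k p)
    {v i j : Fin n} (hi : i.val < k) (hj : j.val < k)
    {a b : ℕ} (ha : p^[a] v = i) (hb : p^[b] v = j) : i = j := by
  wlog hab : a ≤ b generalizing a b i j
  · exact (this hj hi hb ha (le_of_not_ge hab)).symm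
  have hfix : p i = i := (hp.1 i).2 hi
  have : p^[b] v = i := by
    rw [show b = (b - a) + a by omega, Function.iterate_add_apply, ha]
    exact Function.iterate_fixed hfix _
  rw [← this, hb]

/-- the subtree count -/
noncomputable def S (q : Fin n → Fin n) (i : Fin n) : ℕ :=
  Nat.card {v : Fin n // ∃ m, q^[m] v = i}

lemma card_subtype_fin (P : Fin n → Prop) :
    Nat.card {v : Fin n // P v} = (Finset.univ.filter P).card := by
  classical
  simp [Nat.card_eq_fintype_card, Fintype.card_subtype]

lemma S_le (q : Fin n → Fin n) (i : Fin n) : S q i ≤ n := by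
  classical
  have := Nat.card_le_card_of_injective
    (fun v : {v : Fin n // ∃ m, q^[m] v = i} => v.1) (fun a b h => Subtype.ext h)
  simpa [S, Nat.card_eq_fintype_card] using this

lemma card_compl (P : Fin n → Prop) :
    Nat.card {v : Fin n // ¬ P v} = n - Nat.card {v : Fin n // P v} := by
  classical
  simp [Nat.card_eq_fintype_card, Fintype.card_subtype_compl]

/-- partition of all vertices among the subtrees of the roots -/
lemma partition {k : ℕ} {q : Fin n → Fin n} (hq : IsRootedForest n k q) :
    ∑ i ∈ Finset.univ.filter (fun i : Fin n => i.val < k), S q i = n := by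
  classical
  have key : (Finset.univ : Finset (Fin n)).card =
      ∑ i ∈ Finset.univ.filter (fun i : Fin n => i.val < k),
        (Finset.univ.filter (fun v : Fin n => ∃ m, q^[m] v = i)).card := by
    have hroot : ∀ v : Fin n, ∃ i, i ∈ Finset.univ.filter (fun i : Fin n => i.val < k) ∧
        (∃ m, q^[m] v = i) := by
      intro v
      obtain ⟨m, hm⟩ := hq.2 v
      exact ⟨q^[m] v, by simpa using hm, m, rfl⟩
    choose r hr hr2 using hroot
    have := Finset.card_eq_sum_card_fiberwise
      (f := r) (s := Finset.univ) (t := Finset.univ.filter (fun i : Fin n => i.val < k))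
      (fun v _ => hr v)
    rw [this]
    refine Finset.sum_congr rfl (fun i hi => ?_)
    congr 1
    ext v
    simp only [Finset.mem_filter, Finset.mem_univ, true_and]
    constructor
    · rintro rfl; exact hr2 v
    · rintro ⟨m, hm⟩
      obtain ⟨m', hm'⟩ := hr2 v
      have hik : i.val < k := by simpa using hi
      have hrv : (r v).val < k := by have := hr v; simpa using this
      exact root_unique hq hrv hik hm' hm
  have : (Finset.univ : Finset (Fin n)).card = n := by simp
  rw [this] at key
  refine Eq.trans ?_ key.symm
  exact Finset.sum_congr rfl (fun i _ => card_subtype_fin _)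


-- new material
lemma card_sigma' {ι : Type*} [Fintype ι] (β : ι → Type*) [∀ i, Finite (β i)] :
    Nat.card (Sigma β) = ∑ i, Nat.card (β i) := by
  haveI := fun i => Fintype.ofFinite (β i)
  simp [Nat.card_eq_fintype_card, Fintype.card_sigma]

lemma S_conj (σ : Equiv.Perm (Fin n)) (p : Fin n → Fin n) (a : Fin n) :
    S (σ ∘ p ∘ σ.symm) a = S p (σ.symm a) := by
  apply Nat.card_congr
  refine Equiv.subtypeEquiv σ.symm (fun v => ?_)
  constructor
  · rintro ⟨m, hm⟩
    refine ⟨m, ?_⟩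
    rw [conj_iter] at hm
    rw [← hm]
    simp
  · rintro ⟨m, hm⟩
    refine ⟨m, ?_⟩
    rw [conj_iter, hm]
    simp

lemma sum_S_symm {k : ℕ} [Fintype {q : Fin n → Fin n // IsRootedForest n k q}]
    {i j : Fin n} (hi : i.val < k) (hj : j.val < k) :
    ∑ q : {q : Fin n → Fin n // IsRootedForest n k q}, S q.1 i
      = ∑ q : {q : Fin n → Fin n // IsRootedForest n k q}, S q.1 j := by
  set σ := Equiv.swap i j with hσdef
  have hσsymm : σ.symm = σ := Equiv.symm_swap i j
  have hroot : ∀ v : Fin n, ((σ v).val < k ↔ v.val < k) := swap_root_lt hi hj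
  have hinv : Function.Involutive
      (fun q : {q : Fin n → Fin n // IsRootedForest n k q} =>
        (⟨σ ∘ q.1 ∘ σ.symm, conj_forest σ hroot q.2⟩ :
          {q : Fin n → Fin n // IsRootedForest n k q})) := by
    intro q
    exact Subtype.ext (conj_involutive σ hσsymm q.1)
  refine Fintype.sum_equiv hinv.toPerm _ _ (fun q => ?_)
  show S q.1 i = S (σ ∘ q.1 ∘ σ.symm) j
  rw [S_conj, hσsymm, hσdef, Equiv.swap_apply_right]

lemma card_roots {k : ℕ} (hkn : k ≤ n) :
    (Finset.univ.filter (fun i : Fin n => i.val < k)).card = k := by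
  classical
  rw [← Fintype.card_subtype]
  have e : {i : Fin n // i.val < k} ≃ Fin k :=
    { toFun := fun x => ⟨x.1.val, x.2⟩
      invFun := fun y => ⟨⟨y.1, lt_of_lt_of_le y.2 hkn⟩, y.2⟩
      left_inv := fun x => rfl
      right_inv := fun y => rfl }
  rw [Fintype.card_congr e, Fintype.card_fin]

/-- the key recurrence -/
lemma step {k : ℕ} (hkn : k < n) :
    (k+1) * Nat.card {p : Fin n → Fin n // IsRootedForest n k p}
      = k * n * Nat.card {q : Fin n → Fin n // IsRootedForest n (k+1) q} := by
  classical
  haveI : Fintype {q : Fin n → Fin n // IsRootedForest n (k+1) q} := Fintype.ofFinite _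
  set Fq := {q : Fin n → Fin n // IsRootedForest n (k+1) q}
  have hT' : Nat.card Fq = Fintype.card Fq := Nat.card_eq_fintype_card
  -- T n k as a sum
  have h1 : Nat.card {p : Fin n → Fin n // IsRootedForest n k p}
      = ∑ q : Fq, (n - S q.1 (vk hkn)) := by
    rw [Nat.card_congr (cutEquiv hkn), card_sigma']
    exact Finset.sum_congr rfl (fun q _ => card_compl _)
  set A := ∑ q : Fq, S q.1 (vk hkn) with hA
  -- partition: A * (k+1) = n * card Fq
  have h2 : (k+1) * A = n * Fintype.card Fq := by
    have hswap : ∑ i ∈ Finset.univ.filter (fun i : Fin n => i.val < k+1),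
        ∑ q : Fq, S q.1 i = ∑ q : Fq, ∑ i ∈ Finset.univ.filter (fun i : Fin n => i.val < k+1),
          S q.1 i := Finset.sum_comm
    have hright : ∑ q : Fq, ∑ i ∈ Finset.univ.filter (fun i : Fin n => i.val < k+1),
        S q.1 i = n * Fintype.card Fq := by
      rw [Finset.sum_congr rfl (fun q _ => partition q.2)]
      simp [mul_comm]
    have hleft : ∑ i ∈ Finset.univ.filter (fun i : Fin n => i.val < k+1),
        ∑ q : Fq, S q.1 i = (k+1) * A := by
      rw [Finset.sum_congr rfl (fun i hi => ?_), Finset.sum_const, card_roots (by omega),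
        smul_eq_mul]
      have hik : i.val < k + 1 := by simpa using hi
      exact sum_S_symm hik (by simp [vk])
    rw [← hleft, hswap, hright]
  -- A + T n k = n * card Fq
  have h3 : A + Nat.card {p : Fin n → Fin n // IsRootedForest n k p}
      = n * Fintype.card Fq := by
    rw [h1, hA, ← Finset.sum_add_distrib]
    have : ∀ q : Fq, S q.1 (vk hkn) + (n - S q.1 (vk hkn)) = n := fun q =>
      Nat.add_sub_cancel' (S_le _ _)
    rw [Finset.sum_congr rfl (fun q _ => this q)]
    simp [mul_comm]
  -- combine
  have h4 : (k+1) * (A + Nat.card {p : Fin n → Fin n // IsRootedForest n k p})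
      = (k+1) * (n * Fintype.card Fq) := by rw [h3]
  rw [Nat.mul_add, h2] at h4
  have h5 : (k+1) * (n * Fintype.card Fq)
      = k * n * Fintype.card Fq + n * Fintype.card Fq := by ring
  rw [h5] at h4
  rw [hT']
  omega

lemma base : Nat.card {p : Fin n → Fin n // IsRootedForest n n p} = 1 := by
  haveI : Unique {p : Fin n → Fin n // IsRootedForest n n p} :=
    { default := ⟨id, ⟨fun v => by simp [v.isLt], fun v => ⟨0, v.isLt⟩⟩⟩
      uniq := fun p => Subtype.ext (funext fun v => (p.2.1 v).2 v.isLt) }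
  exact Nat.card_unique

end ForestAux

theorem card_forest_roots_one_to_k (n k : ℕ) (hk : 1 ≤ k) (hk' : k ≤ n) :
    Nat.card {p : Fin n → Fin n // IsRootedForest n k p} =
      if k = n then 1 else k * n ^ (n - k - 1) := by
  suffices h : ∀ d k', k' + d = n →
      Nat.card {p : Fin n → Fin n // IsRootedForest n k' p} =
        if k' = n then 1 else k' * n ^ (n - k' - 1) from h (n - k) k (by omega)
  intro d
  induction d with
  | zero =>
    intro k' hk'd
    have : k' = n := by omega
    subst this
    simp [ForestAux.base]
  | succ d ih =>
    intro k' hk'd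
    have hkn : k' < n := by omega
    have h' := ih (k'+1) (by omega)
    have hstep := ForestAux.step hkn
    rw [if_neg (by omega)]
    by_cases hc : k' + 1 = n
    · rw [if_pos hc] at h'
      have h0 : n - k' - 1 = 0 := by omega
      rw [h0, pow_zero, mul_one]
      apply Nat.eq_of_mul_eq_mul_left (show 0 < k' + 1 by omega)
      rw [hstep, h', mul_one, ← hc]
      ring
    · rw [if_neg hc] at h'
      apply Nat.eq_of_mul_eq_mul_left (show 0 < k' + 1 by omega)
      rw [hstep, h']
      have h0 : n - k' - 1 = (n - (k'+1) - 1) + 1 := by omega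
      rw [h0, pow_succ]
      ring
end

section
/- For 1 ≤ k ≤ n, the number of forests of k rooted trees on vertex set {1,…,n} (with arbitrary roots) equals C(n−1, k−1) · n^(n−k). -/
/-- `p` is the parent function of a rooted forest on `Fin n` (with arbitrary roots):
every vertex eventually reaches a fixed point of `p`.  The roots are the fixed
points of `p`. -/
def IsForest (n : ℕ) (p : Fin n → Fin n) : Prop :=
  ∀ v, ∃ m, p ((p^[m]) v) = (p^[m]) v

namespace ForestAux

variable {n : ℕ}

/-- In a forest, any periodic point is a fixed point. -/
lemma cycle_fixed {p : Fin n → Fin n} (hp : IsForest n p) {w : Fin n} {t : ℕ}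
    (ht : 0 < t) (h : p^[t] w = w) : p w = w := by
  obtain ⟨m, hm⟩ := hp w
  have hper : p^[t * (m + 1)] w = w := by
    rw [Function.iterate_mul]
    exact Function.iterate_fixed h (m + 1)
  have hge : m ≤ t * (m + 1) := by nlinarith
  have hc : p^[t * (m + 1)] w = p^[m] w := by
    have h1 : p^[t * (m + 1)] w = p^[(t * (m + 1) - m) + m] w := by
      rw [Nat.sub_add_cancel hge]
    rw [h1, Function.iterate_add_apply]
    exact Function.iterate_fixed hm _
  have h2 : w = p^[m] w := hper.symm.trans hc
  rw [h2]; exact hm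

/-- In a forest on `Fin n`, iterating `n` times reaches a fixed point. -/
lemma iterate_n_fixed {p : Fin n → Fin n} (hp : IsForest n p) (v : Fin n) :
    p (p^[n] v) = p^[n] v := by
  have hni : ¬ Function.Injective (fun i : Fin (n + 1) => p^[(i : ℕ)] v) := by
    intro hinj
    have := Fintype.card_le_of_injective _ hinj
    simp at this
  rw [Function.not_injective_iff] at hni
  obtain ⟨i, j, hij, hne⟩ := hni
  wlog hlt : (i : ℕ) < (j : ℕ) generalizing i j
  · exact this j i hij.symm (Ne.symm hne)
      (lt_of_le_of_ne (Nat.le_of_not_lt hlt) (fun h => hne (Fin.ext h.symm)))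
  have hfix : p (p^[(i : ℕ)] v) = p^[(i : ℕ)] v := by
    apply cycle_fixed hp (t := (j : ℕ) - (i : ℕ)) (Nat.sub_pos_of_lt hlt)
    rw [← Function.iterate_add_apply, Nat.sub_add_cancel (Nat.le_of_lt hlt)]
    exact hij.symm
  have hin : (i : ℕ) ≤ n := Nat.le_of_lt_succ i.isLt
  have h2 : p^[n] v = p^[(i : ℕ)] v := by
    have h1 : p^[n] v = p^[(n - (i : ℕ)) + (i : ℕ)] v := by
      rw [Nat.sub_add_cancel hin]
    rw [h1, Function.iterate_add_apply]
    exact Function.iterate_fixed hfix _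
  rw [h2]; exact hfix

/-- The root of `v` in the forest `p`. -/
def froot (p : Fin n → Fin n) (v : Fin n) : Fin n := p^[n] v

lemma froot_fixed {p : Fin n → Fin n} (hp : IsForest n p) (v : Fin n) :
    p (froot p v) = froot p v := iterate_n_fixed hp v

lemma froot_of_fixed {p : Fin n → Fin n} {r : Fin n} (hr : p r = r) :
    froot p r = r := Function.iterate_fixed hr n

lemma froot_iterate {p : Fin n → Fin n} (hp : IsForest n p) (v : Fin n) (i : ℕ) :
    froot p (p^[i] v) = froot p v := by
  unfold froot
  rw [← Function.iterate_add_apply]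
  obtain ⟨m, hm⟩ : ∃ m, n + i = m + n := ⟨i, Nat.add_comm n i⟩
  rw [hm, Function.iterate_add_apply]
  exact Function.iterate_fixed (iterate_n_fixed hp v) m

lemma froot_eq_iff {p : Fin n → Fin n} (hp : IsForest n p) {r : Fin n} (hr : p r = r)
    (v : Fin n) : froot p v = r ↔ ∃ i, p^[i] v = r := by
  constructor
  · intro h; exact ⟨n, h⟩
  · rintro ⟨i, hi⟩
    have := froot_iterate hp v i
    rw [hi, froot_of_fixed hr] at this
    exact this.symm

/-- Iterates agree as long as the orbit avoids the updated point. -/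
lemma iterate_congr {p q : Fin n → Fin n} {r : Fin n}
    (hpq : ∀ x, x ≠ r → p x = q x) {w : Fin n} {m : ℕ}
    (h : ∀ i, i < m → p^[i] w ≠ r) : p^[m] w = q^[m] w := by
  induction m with
  | zero => rfl
  | succ m ih =>
    rw [Function.iterate_succ_apply', Function.iterate_succ_apply',
      ← ih (fun i hi => h i (Nat.lt_succ_of_lt hi)),
      hpq _ (h m (Nat.lt_succ_self m))]

section Graft

variable {p q : Fin n → Fin n} {r v : Fin n}

lemma no_hit {w : Fin n} (hp : IsForest n p) (hr : p r = r) (hw : froot p w ≠ r) :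
    ∀ j, p^[j] w ≠ r := by
  intro j hj
  exact hw ((froot_eq_iff hp hr w).mpr ⟨j, hj⟩)

lemma graft_ne (hp : IsForest n p) (hr : p r = r) (hv : froot p v ≠ r) : v ≠ r := by
  intro h; rw [h] at hv; exact hv (froot_of_fixed hr)

/-- Grafting the tree of root `r` onto `v` (outside that tree) yields a forest. -/
lemma graft_isForest (hp : IsForest n p) (hr : p r = r) (hv : froot p v ≠ r) :
    IsForest n (Function.update p r v) := by
  set q := Function.update p r v with hq
  have hagree : ∀ x, x ≠ r → p x = q x := fun x hx =>
    (Function.update_of_ne hx v p).symm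
  have hqr : q r = v := Function.update_self r v p
  intro w
  by_cases hcase : froot p w = r
  · have hex : ∃ i, p^[i] w = r := (froot_eq_iff hp hr w).mp hcase
    set i0 := Nat.find hex with hi0
    have hhit : p^[i0] w = r := Nat.find_spec hex
    have hmin : ∀ j, j < i0 → p^[j] w ≠ r := fun j hj => Nat.find_min hex hj
    have h1 : q^[i0] w = r := by rw [← iterate_congr hagree hmin]; exact hhit
    have h2 : q^[i0 + 1] w = v := by
      rw [Function.iterate_succ_apply', h1, hqr]
    have hvavoid : ∀ j, p^[j] v ≠ r := no_hit hp hr hv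
    have h3 : q^[n] v = p^[n] v := (iterate_congr hagree (fun j _ => hvavoid j)).symm
    refine ⟨n + (i0 + 1), ?_⟩
    rw [Function.iterate_add_apply, h2, h3]
    have hc : p (p^[n] v) = p^[n] v := iterate_n_fixed hp v
    rw [← hagree (p^[n] v) hv]
    exact hc
  · have hwavoid : ∀ j, p^[j] w ≠ r := no_hit hp hr hcase
    refine ⟨n, ?_⟩
    rw [← iterate_congr hagree (fun j _ => hwavoid j),
      ← hagree (p^[n] w) hcase]
    exact iterate_n_fixed hp w

lemma graft_fixed_iff (hr : p r = r) (hvne : v ≠ r) (x : Fin n) :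
    Function.update p r v x = x ↔ (p x = x ∧ x ≠ r) := by
  by_cases hx : x = r
  · subst hx
    rw [Function.update_self]
    simp [hvne, hr]
  · rw [Function.update_of_ne hx]
    simp [hx]

/-- Cutting the edge out of a non-root `r` yields a forest. -/
lemma cut_isForest (hq : IsForest n q) (r : Fin n) :
    IsForest n (Function.update q r r) := by
  set p := Function.update q r r with hp
  have hagree : ∀ x, x ≠ r → q x = p x := fun x hx =>
    (Function.update_of_ne hx r q).symm
  have hpr : p r = r := Function.update_self r r q
  intro w
  by_cases hcase : ∃ i, q^[i] w = r
  · set i0 := Nat.find hcase with hi0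
    have hhit : q^[i0] w = r := Nat.find_spec hcase
    have hmin : ∀ j, j < i0 → q^[j] w ≠ r := fun j hj => Nat.find_min hcase hj
    refine ⟨i0, ?_⟩
    rw [← iterate_congr hagree hmin, hhit, hpr]
  · push_neg at hcase
    refine ⟨n, ?_⟩
    rw [← iterate_congr hagree (fun j _ => hcase j)]
    have hc : q (q^[n] w) = q^[n] w := iterate_n_fixed hq w
    have hcr : q^[n] w ≠ r := hcase n
    rw [← hagree _ hcr]
    exact hc

lemma cut_fixed_iff (r x : Fin n) :
    Function.update q r r x = x ↔ (q x = x ∨ x = r) := by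
  by_cases hx : x = r
  · subst hx; simp [Function.update_self]
  · rw [Function.update_of_ne hx]; simp [hx]

/-- After cutting the edge out of a non-root `r`, the former parent `q r` is not
in the tree of `r`. -/
lemma cut_parent_not_in_tree (hq : IsForest n q) {r : Fin n} (hr : q r ≠ r) :
    froot (Function.update q r r) (q r) ≠ r := by
  set p := Function.update q r r with hp
  have hagree : ∀ x, x ≠ r → q x = p x := fun x hx =>
    (Function.update_of_ne hx r q).symm
  have hpr : p r = r := Function.update_self r r q
  have hforest : IsForest n p := cut_isForest hq r
  intro hroot
  have hex : ∃ i, p^[i] (q r) = r := (froot_eq_iff hforest hpr (q r)).mp hroot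
  set i0 := Nat.find hex with hi0
  have hhit : p^[i0] (q r) = r := Nat.find_spec hex
  have hmin : ∀ j, j < i0 → p^[j] (q r) ≠ r := fun j hj => Nat.find_min hex hj
  have hagree' : ∀ x, x ≠ r → p x = q x := fun x hx => (hagree x hx).symm
  have h1 : q^[i0] (q r) = r := by
    rw [← iterate_congr hagree' hmin]
    exact hhit
  have h2 : q^[i0 + 1] r = r := by
    rw [Function.iterate_succ_apply]
    exact h1
  exact hr (cycle_fixed hq (Nat.succ_pos i0) h2)

end Graft

/-- The counted predicate. -/
def PForest (n k : ℕ) (p : Fin n → Fin n) : Prop :=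
  IsForest n p ∧ Nat.card {v : Fin n // p v = v} = k

lemma update_self_of_fixed {p : Fin n → Fin n} {r : Fin n} (hr : p r = r) :
    Function.update p r r = p := by
  funext x
  by_cases hx : x = r
  · subst hx; rw [Function.update_self, hr]
  · rw [Function.update_of_ne hx]

/-- Generic currying equiv used to compute cardinalities. -/
def sigmaEquiv {α γ : Type*} (P : α → Prop) (Q : α → γ → Prop) :
    {x : α × γ // P x.1 ∧ Q x.1 x.2} ≃ Σ a : {a // P a}, {c : γ // Q a.1 c} where
  toFun x := ⟨⟨x.1.1, x.2.1⟩, ⟨x.1.2, x.2.2⟩⟩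
  invFun y := ⟨(y.1.1, y.2.1), y.1.2, y.2.2⟩
  left_inv x := rfl
  right_inv y := rfl

lemma card_fix_graft {p : Fin n → Fin n} {r v : Fin n} (hr : p r = r) (hv : v ≠ r) :
    Nat.card {x : Fin n // Function.update p r v x = x} + 1
      = Nat.card {x : Fin n // p x = x} := by
  classical
  rw [Nat.card_eq_fintype_card, Nat.card_eq_fintype_card]
  have e1 : {x : Fin n // Function.update p r v x = x} ≃ {x : Fin n // p x = x ∧ x ≠ r} :=
    Equiv.subtypeEquivRight (graft_fixed_iff hr hv)
  have e2 : {x : Fin n // p x = x ∧ x ≠ r}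
      ≃ {y : {x : Fin n // p x = x} // ¬ (y.1 = r)} :=
    (Equiv.subtypeSubtypeEquivSubtypeInter _ _).symm
  rw [Fintype.card_congr (e1.trans e2), Fintype.card_subtype_compl]
  have h1 : Fintype.card {y : {x : Fin n // p x = x} // y.1 = r} = 1 := by
    have e3 : {y : {x : Fin n // p x = x} // y.1 = r}
        ≃ {y : {x : Fin n // p x = x} // y = ⟨r, hr⟩} :=
      Equiv.subtypeEquivRight (fun y => by
        constructor
        · intro h; exact Subtype.ext h
        · intro h; rw [h])
    rw [Fintype.card_congr e3]
    exact Fintype.card_subtype_eq (⟨r, hr⟩ : {x : Fin n // p x = x})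
  rw [h1]
  have hpos : 0 < Fintype.card {x : Fin n // p x = x} :=
    Fintype.card_pos_iff.mpr ⟨⟨r, hr⟩⟩
  omega

lemma card_fix_cut {q : Fin n → Fin n} {r : Fin n} (hr : q r ≠ r) :
    Nat.card {x : Fin n // Function.update q r r x = x}
      = Nat.card {x : Fin n // q x = x} + 1 := by
  have h := card_fix_graft (p := Function.update q r r) (r := r) (v := q r)
    (Function.update_self r r q) hr
  rw [Function.update_idem, Function.update_eq_self] at h
  exact h.symm

/-- Per-forest count of (root, vertex outside that root's tree) pairs. -/
lemma pair_count {k : ℕ} {p : Fin n → Fin n} (hp : IsForest n p)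
    (hfix : Nat.card {x : Fin n // p x = x} = k + 1) :
    Nat.card {rv : Fin n × Fin n // p rv.1 = rv.1 ∧ froot p rv.2 ≠ rv.1} = n * k := by
  classical
  rw [Nat.card_eq_fintype_card] at hfix ⊢
  rw [Fintype.card_congr (sigmaEquiv (fun r => p r = r) (fun r v => froot p v ≠ r)),
    Fintype.card_sigma]
  -- sizes of trees
  set g : Fin n → {x : Fin n // p x = x} := fun v => ⟨froot p v, froot_fixed hp v⟩ with hg
  have hsize : ∀ r : {x : Fin n // p x = x},
      Fintype.card {v : Fin n // froot p v = r.1} = Fintype.card {v : Fin n // g v = r} := by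
    intro r
    refine Fintype.card_congr (Equiv.subtypeEquivRight (fun v => ?_))
    constructor
    · intro h; exact Subtype.ext h
    · intro h; exact congrArg Subtype.val h
  have htotal : ∑ r : {x : Fin n // p x = x}, Fintype.card {v : Fin n // g v = r} = n := by
    rw [← Fintype.card_sigma, Fintype.card_congr (Equiv.sigmaFiberEquiv g), Fintype.card_fin]
  have hfiber : ∀ r : {x : Fin n // p x = x},
      Fintype.card {v : Fin n // froot p v ≠ r.1}
        = n - Fintype.card {v : Fin n // froot p v = r.1} := by
    intro r
    rw [Fintype.card_subtype_compl, Fintype.card_fin]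
  have hle : ∀ r : {x : Fin n // p x = x},
      Fintype.card {v : Fin n // froot p v = r.1} ≤ n := by
    intro r
    have := Fintype.card_subtype_le (fun v : Fin n => froot p v = r.1)
    rwa [Fintype.card_fin] at this
  calc ∑ r : {x : Fin n // p x = x}, Fintype.card {v : Fin n // froot p v ≠ r.1}
      = ∑ r : {x : Fin n // p x = x},
          (n - Fintype.card {v : Fin n // g v = r}) := by
        refine Finset.sum_congr rfl (fun r _ => ?_)
        rw [hfiber r, hsize r]
    _ = n * k := by
        have h1 : ∑ r : {x : Fin n // p x = x},
            (n - Fintype.card {v : Fin n // g v = r})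
            + ∑ r : {x : Fin n // p x = x}, Fintype.card {v : Fin n // g v = r}
            = ∑ r : {x : Fin n // p x = x}, n := by
          rw [← Finset.sum_add_distrib]
          refine Finset.sum_congr rfl (fun r _ => ?_)
          have := hle r
          rw [hsize r] at this
          omega
        rw [htotal, Finset.sum_const, Finset.card_univ, hfix, smul_eq_mul] at h1
        have h2 : (k + 1) * n = n * k + n := by ring
        omega

/-- The step bijection: grafting/cutting. -/
def stepEquiv (n k : ℕ) :
    {x : (Fin n → Fin n) × (Fin n × Fin n) //
        PForest n (k + 1) x.1 ∧ (x.1 x.2.1 = x.2.1 ∧ froot x.1 x.2.2 ≠ x.2.1)}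
      ≃ {x : (Fin n → Fin n) × Fin n // PForest n k x.1 ∧ x.1 x.2 ≠ x.2} where
  toFun := fun x => match x with
    | ⟨⟨p, r, v⟩, ⟨hp, hcard⟩, hr, hv⟩ =>
      ⟨(Function.update p r v, r),
        ⟨⟨graft_isForest hp hr hv, by
          have hr' : p r = r := hr
          have hv' : froot p v ≠ r := hv
          have hp' : IsForest n p := hp
          have hcard' : Nat.card {x : Fin n // p x = x} = k + 1 := hcard
          have h := card_fix_graft hr' (graft_ne hp' hr' hv')
          rw [hcard'] at h
          show Nat.card {x : Fin n // Function.update p r v x = x} = k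
          omega⟩, by
          show Function.update p r v r ≠ r
          rw [Function.update_self]
          exact graft_ne hp hr hv⟩⟩
  invFun := fun y => match y with
    | ⟨⟨q, r⟩, ⟨hq, hcard⟩, hr⟩ =>
      ⟨(Function.update q r r, r, q r),
        ⟨⟨cut_isForest hq r, by
          have hr' : q r ≠ r := hr
          have hcard' : Nat.card {x : Fin n // q x = x} = k := hcard
          have h := card_fix_cut hr'
          rw [hcard'] at h
          show Nat.card {x : Fin n // Function.update q r r x = x} = k + 1
          exact h⟩,
          Function.update_self r r q, cut_parent_not_in_tree hq hr⟩⟩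
  left_inv := by
    rintro ⟨⟨p, r, v⟩, ⟨hp, hcard⟩, hr, hv⟩
    apply Subtype.ext
    show (Function.update (Function.update p r v) r r, r, Function.update p r v r)
      = (p, r, v)
    rw [Function.update_idem, update_self_of_fixed hr, Function.update_self]
  right_inv := by
    rintro ⟨⟨q, r⟩, ⟨hq, hcard⟩, hr⟩
    apply Subtype.ext
    show (Function.update (Function.update q r r) r (q r), r) = (q, r)
    rw [Function.update_idem, Function.update_eq_self]

/-- The counting recurrence. -/
lemma step_count (n k : ℕ) :
    Nat.card {p : Fin n → Fin n // PForest n k p} * (n - k)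
      = Nat.card {p : Fin n → Fin n // PForest n (k + 1) p} * (n * k) := by
  classical
  have hL : Nat.card {x : (Fin n → Fin n) × Fin n // PForest n k x.1 ∧ x.1 x.2 ≠ x.2}
      = Nat.card {p : Fin n → Fin n // PForest n k p} * (n - k) := by
    rw [Nat.card_eq_fintype_card, Nat.card_eq_fintype_card,
      Fintype.card_congr (sigmaEquiv (PForest n k) (fun p r => p r ≠ r)),
      Fintype.card_sigma]
    have hfiber : ∀ a : {p : Fin n → Fin n // PForest n k p},
        Fintype.card {r : Fin n // a.1 r ≠ r} = n - k := by
      intro a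
      rw [Fintype.card_subtype_compl, Fintype.card_fin]
      have := a.2.2
      rw [Nat.card_eq_fintype_card] at this
      rw [this]
    rw [Finset.sum_congr rfl (fun a _ => hfiber a), Finset.sum_const,
      Finset.card_univ, smul_eq_mul]
  have hR : Nat.card {x : (Fin n → Fin n) × (Fin n × Fin n) //
        PForest n (k + 1) x.1 ∧ (x.1 x.2.1 = x.2.1 ∧ froot x.1 x.2.2 ≠ x.2.1)}
      = Nat.card {p : Fin n → Fin n // PForest n (k + 1) p} * (n * k) := by
    rw [Nat.card_eq_fintype_card, Nat.card_eq_fintype_card,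
      Fintype.card_congr (sigmaEquiv (PForest n (k + 1))
        (fun p (rv : Fin n × Fin n) => p rv.1 = rv.1 ∧ froot p rv.2 ≠ rv.1)),
      Fintype.card_sigma]
    have hfiber : ∀ a : {p : Fin n → Fin n // PForest n (k + 1) p},
        Fintype.card {rv : Fin n × Fin n // a.1 rv.1 = rv.1 ∧ froot a.1 rv.2 ≠ rv.1}
          = n * k := by
      intro a
      have h := pair_count a.2.1 a.2.2
      rw [Nat.card_eq_fintype_card] at h
      exact h
    rw [Finset.sum_congr rfl (fun a _ => hfiber a), Finset.sum_const,
      Finset.card_univ, smul_eq_mul]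
  rw [← hL, ← hR]
  exact (Nat.card_congr (stepEquiv n k)).symm

/-- Base case: only the identity has all `n` vertices as roots. -/
lemma card_base (n : ℕ) : Nat.card {p : Fin n → Fin n // PForest n n p} = 1 := by
  classical
  rw [Nat.card_eq_one_iff_unique]
  constructor
  · constructor
    intro x y
    have hx : ∀ v, x.1 v = v := by
      by_contra h
      push_neg at h
      obtain ⟨v, hv⟩ := h
      have := Fintype.card_subtype_lt (p := fun v => x.1 v = v) hv
      have h2 := x.2.2
      rw [Nat.card_eq_fintype_card] at h2
      rw [h2, Fintype.card_fin] at this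
      omega
    have hy : ∀ v, y.1 v = v := by
      by_contra h
      push_neg at h
      obtain ⟨v, hv⟩ := h
      have := Fintype.card_subtype_lt (p := fun v => y.1 v = v) hv
      have h2 := y.2.2
      rw [Nat.card_eq_fintype_card] at h2
      rw [h2, Fintype.card_fin] at this
      omega
    apply Subtype.ext
    funext v
    rw [hx v, hy v]
  · refine ⟨⟨fun v => v, fun v => ⟨0, rfl⟩, ?_⟩⟩
    rw [Nat.card_eq_fintype_card]
    have : Fintype.card {v : Fin n // v = v} = Fintype.card (Fin n) :=
      Fintype.card_congr (Equiv.subtypeUnivEquiv (fun v => rfl))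
    rw [this, Fintype.card_fin]

end ForestAux

theorem card_forests_k_trees (n k : ℕ) (hk : 1 ≤ k) (hk' : k ≤ n) :
    Nat.card {p : Fin n → Fin n // IsForest n p ∧
        Nat.card {v : Fin n // p v = v} = k} =
      Nat.choose (n - 1) (k - 1) * n ^ (n - k) := by
  have main : ∀ d j, 1 ≤ j → j ≤ n → n - j = d →
      Nat.card {p : Fin n → Fin n // ForestAux.PForest n j p}
        = Nat.choose (n - 1) (j - 1) * n ^ (n - j) := by
    intro d
    induction d with
    | zero =>
      intro j hj1 hjn hd
      have hjeq : j = n := by omega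
      subst hjeq
      rw [ForestAux.card_base, Nat.sub_self, pow_zero,
        show j - 1 = j - 1 from rfl, Nat.choose_self, mul_one]
    | succ d ih =>
      intro j hj1 hjn hd
      have hlt : j < n := by omega
      have ihj := ih (j + 1) (by omega) (by omega) (by omega)
      have hstep := ForestAux.step_count n j
      rw [Nat.add_sub_cancel] at ihj
      rw [ihj] at hstep
      have hid := Nat.choose_succ_right_eq (n - 1) (j - 1)
      rw [show j - 1 + 1 = j from by omega,
        show n - 1 - (j - 1) = n - j from by omega] at hid
      have hpow : n ^ (n - j) = n ^ (n - (j + 1)) * n := by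
        rw [← pow_succ, show n - (j + 1) + 1 = n - j from by omega]
      have hkey : (Nat.choose (n - 1) j * n ^ (n - (j + 1))) * (n * j)
          = (Nat.choose (n - 1) (j - 1) * n ^ (n - j)) * (n - j) := by
        rw [hpow]
        calc (Nat.choose (n - 1) j * n ^ (n - (j + 1))) * (n * j)
            = (Nat.choose (n - 1) j * j) * (n ^ (n - (j + 1)) * n) := by ring
          _ = (Nat.choose (n - 1) (j - 1) * (n - j)) * (n ^ (n - (j + 1)) * n) := by
              rw [hid]
          _ = (Nat.choose (n - 1) (j - 1) * (n ^ (n - (j + 1)) * n)) * (n - j) := by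
              ring
      rw [hkey] at hstep
      exact Nat.eq_of_mul_eq_mul_right (by omega) hstep
  exact main (n - k) k hk hk' rfl
end

section
/- The number of rooted labeled trees on n+1 vertices with a specified root whose root has exactly k children equals C(n−1, k−1) · n^(n−k). -/
/-- `p` is the parent function of a rooted tree on `Fin (n+1)` with root `0`:
the only fixed point of `p` is `0`, and every vertex eventually reaches it. -/
def IsRootedTree (n : ℕ) (p : Fin (n + 1) → Fin (n + 1)) : Prop :=
  (∀ v, p v = v ↔ v = 0) ∧ ∀ v, ∃ m, (p^[m]) v = 0

/-!
Let `T k` be the number of trees with root degree `k`. Take a tree with root degree `k + 1`, a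
non-root vertex `v` and a child `c` of the root that is not an ancestor of `v`, and re-hang `c`
below `v`. The result is a tree with root degree `k` together with the marked vertex `c`, which is
neither the root nor a child of the root; cutting the marked vertex off its parent and hanging it
from the root undoes this. The path from `v` to the root meets exactly one child of the root, so
there are `n * k` choices of `(v, c)`, and `n - k` choices of the marked vertex. Hence
`T (k + 1) * (n * k) = T k * (n - k)`, and together with `T n = 1` (the star) this gives
`T k = C(n - 1, k - 1) * n ^ (n - k)`.
-/

open Function Finset

theorem Function.iterate_eq_of_forall_iterate_ne {α : Type*} {f g : α → α} {c x : α} {i : ℕ}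
    (hfg : ∀ y ≠ c, g y = f y) (hx : ∀ j < i, f^[j] x ≠ c) : g^[i] x = f^[i] x := by
  induction i with
  | zero => rfl
  | succ i ih =>
    rw [iterate_succ_apply', iterate_succ_apply', ih fun j hj => hx j (by omega),
      hfg _ (hx i (by omega))]

namespace IsRootedTree

variable {n : ℕ} {p : Fin (n + 1) → Fin (n + 1)} {c u v : Fin (n + 1)}

theorem map_zero (h : IsRootedTree n p) : p 0 = 0 := (h.1 0).2 rfl

theorem iterate_eq_zero_of_le (h : IsRootedTree n p) {m j : ℕ} (hm : p^[m] v = 0)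
    (hmj : m ≤ j) : p^[j] v = 0 := by
  rw [← Nat.sub_add_cancel hmj, iterate_add_apply, hm, iterate_fixed h.map_zero]

theorem iterate_ne_self (h : IsRootedTree n p) (hu : u ≠ 0) {t : ℕ} (ht : 0 < t) :
    p^[t] u ≠ u := by
  intro hper
  obtain ⟨m, hm⟩ := h.2 u
  have hcycle : p^[t * m] u = u := by rw [iterate_mul]; exact iterate_fixed hper m
  exact hu (hcycle ▸ h.iterate_eq_zero_of_le hm (Nat.le_mul_of_pos_left m ht))

theorem existsUnique_root_child_iterate_eq (h : IsRootedTree n p) (hv : v ≠ 0) :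
    ∃! c, (c ≠ 0 ∧ p c = 0) ∧ ∃ m, p^[m] v = c := by
  classical
  set d := Nat.find (h.2 v)
  have hd : 0 < d :=
    Nat.pos_of_ne_zero fun h0 => hv (by simpa [d, h0] using Nat.find_spec (h.2 v))
  refine ⟨p^[d - 1] v, ⟨⟨Nat.find_min (h.2 v) (by omega), ?_⟩, d - 1, rfl⟩, ?_⟩
  · have hspec : p^[d - 1 + 1] v = 0 := by
      rw [Nat.sub_add_cancel hd]
      exact Nat.find_spec (h.2 v)
    rwa [iterate_succ_apply'] at hspec
  · rintro c ⟨⟨hc, hpc⟩, m, rfl⟩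
    have hle : d ≤ m + 1 := Nat.find_min' (h.2 v) (by rwa [iterate_succ_apply'])
    have hlt : m < d := by
      by_contra! hdm
      exact hc (h.iterate_eq_zero_of_le (Nat.find_spec (h.2 v)) hdm)
    rw [show m = d - 1 by omega]

theorem update_of_exists_iterate_eq_zero (h : IsRootedTree n p) (hc : c ≠ 0) (hvc : v ≠ c)
    (hreach : ∃ m, (update p c v)^[m] c = 0) : IsRootedTree n (update p c v) := by
  refine ⟨fun w => ?_, fun w => ?_⟩
  · rcases eq_or_ne w c with rfl | hwc
    · simp [hvc, hc]
    · rw [update_of_ne hwc]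
      exact h.1 w
  · obtain ⟨m, hm⟩ := h.2 w
    induction m generalizing w with
    | zero => exact ⟨0, hm⟩
    | succ m ih =>
      obtain ⟨m', hm'⟩ := ih (p w) (by rwa [← iterate_succ_apply])
      rcases eq_or_ne w c with rfl | hwc
      · exact hreach
      · exact ⟨m' + 1, by rwa [iterate_succ_apply, update_of_ne hwc]⟩

theorem update_of_forall_iterate_ne (h : IsRootedTree n p) (hc : c ≠ 0)
    (hv : ∀ m, p^[m] v ≠ c) : IsRootedTree n (update p c v) := by
  obtain ⟨m, hm⟩ := h.2 v
  refine h.update_of_exists_iterate_eq_zero hc (hv 0) ⟨m + 1, ?_⟩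
  rw [iterate_succ_apply, update_self,
    iterate_eq_of_forall_iterate_ne (fun _ hy => update_of_ne hy _ _) fun j _ => hv j, hm]

theorem update_zero (h : IsRootedTree n p) (hu : u ≠ 0) : IsRootedTree n (update p u 0) :=
  h.update_of_exists_iterate_eq_zero hu hu.symm ⟨1, update_self _ _ _⟩

theorem iterate_update_zero_ne (h : IsRootedTree n p) (hu : u ≠ 0) (m : ℕ) :
    (update p u 0)^[m] (p u) ≠ u := by
  classical
  -- A first return to `u` would be a cycle of `p` through `u`.
  intro hm
  have hex : ∃ m, (update p u 0)^[m] (p u) = u := ⟨m, hm⟩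
  have hcycle : p^[Nat.find hex] (p u) = u := by
    rw [iterate_eq_of_forall_iterate_ne (g := p) (fun y hy => (update_of_ne hy 0 p).symm)
      fun j hj => Nat.find_min hex hj]
    exact Nat.find_spec hex
  exact h.iterate_ne_self hu (Nat.succ_pos _) (by rwa [iterate_succ_apply])

end IsRootedTree

namespace RootedTree

variable {n : ℕ} {p : Fin (n + 1) → Fin (n + 1)} {c u v : Fin (n + 1)}

def rootChildren (p : Fin (n + 1) → Fin (n + 1)) : Finset (Fin (n + 1)) :=
  {c ∈ univ.erase 0 | p c = 0}

theorem mem_rootChildren : c ∈ rootChildren p ↔ c ≠ 0 ∧ p c = 0 := by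
  simp [rootChildren]

theorem rootChildren_subset : rootChildren p ⊆ univ.erase 0 := filter_subset _ _

theorem card_univ_erase_zero : #(univ.erase (0 : Fin (n + 1))) = n := by
  simp [card_erase_of_mem]

theorem rootChildren_update_of_ne_zero (hv : v ≠ 0) :
    rootChildren (update p c v) = (rootChildren p).erase c := by
  ext w
  rcases eq_or_ne w c with rfl | hwc
  · simp [mem_rootChildren, hv]
  · simp [mem_rootChildren, hwc]

theorem rootChildren_update_zero (hu : u ≠ 0) :
    rootChildren (update p u 0) = insert u (rootChildren p) := by
  ext w
  rcases eq_or_ne w u with rfl | hwu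
  · simp [mem_rootChildren, hu]
  · simp [mem_rootChildren, hwu]

open scoped Classical in
theorem card_rootChildren_filter_forall_iterate_ne (h : IsRootedTree n p) (hv : v ≠ 0) :
    #{c ∈ rootChildren p | ∀ m, p^[m] v ≠ c} = #(rootChildren p) - 1 := by
  obtain ⟨c, ⟨hc, m, hm⟩, huniq⟩ := h.existsUnique_root_child_iterate_eq hv
  have hfilter : {c ∈ rootChildren p | ∀ m, p^[m] v ≠ c} = (rootChildren p).erase c := by
    ext w
    simp only [mem_filter, mem_erase]
    refine ⟨fun ⟨hw, hwv⟩ => ⟨fun hwc => hwv m (hm.trans hwc.symm), hw⟩, fun ⟨hwc, hw⟩ => ?_⟩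
    exact ⟨hw, fun m' hm' => hwc (huniq w ⟨mem_rootChildren.1 hw, m', hm'⟩)⟩
  rw [hfilter, card_erase_of_mem (mem_rootChildren.2 hc)]

open scoped Classical in
noncomputable def withRootDegree (n k : ℕ) : Finset (Fin (n + 1) → Fin (n + 1)) :=
  {p | IsRootedTree n p ∧ #(rootChildren p) = k}

theorem mem_withRootDegree {k : ℕ} :
    p ∈ withRootDegree n k ↔ IsRootedTree n p ∧ #(rootChildren p) = k := by
  simp [withRootDegree]

theorem withRootDegree_self : withRootDegree n n = {fun _ => 0} := by
  ext p
  rw [mem_withRootDegree, mem_singleton]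
  constructor
  · rintro ⟨h, hdeg⟩
    have hall : rootChildren p = univ.erase 0 :=
      eq_of_subset_of_card_le rootChildren_subset (by rw [card_univ_erase_zero, hdeg])
    funext v
    rcases eq_or_ne v 0 with rfl | hv
    · exact h.map_zero
    · exact (mem_rootChildren.1 (hall ▸ mem_erase.2 ⟨hv, mem_univ v⟩)).2
  · rintro rfl
    refine ⟨⟨fun v => by simp [eq_comm], fun v => ⟨1, rfl⟩⟩, ?_⟩
    have hall : rootChildren (fun _ : Fin (n + 1) => 0) = univ.erase 0 := by
      ext
      simp [mem_rootChildren]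
    rw [hall, card_univ_erase_zero]

-- `⟨p, v, c⟩` stands for re-hanging the root child `c` of `p` below `v`.
open scoped Classical in
noncomputable def regraftings (n k : ℕ) :
    Finset (Σ _ : Fin (n + 1) → Fin (n + 1), Σ _ : Fin (n + 1), Fin (n + 1)) :=
  (withRootDegree n (k + 1)).sigma fun p =>
    (univ.erase 0).sigma fun v => {c ∈ rootChildren p | ∀ m, p^[m] v ≠ c}

noncomputable def markedTrees (n k : ℕ) :
    Finset (Σ _ : Fin (n + 1) → Fin (n + 1), Fin (n + 1)) :=
  (withRootDegree n k).sigma fun q => univ.erase 0 \ rootChildren q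

theorem card_regraftings (n k : ℕ) :
    #(regraftings n k) = #(withRootDegree n (k + 1)) * (n * k) := by
  classical
  rw [regraftings, card_sigma]
  refine sum_const_nat fun p hp => ?_
  obtain ⟨h, hdeg⟩ := mem_withRootDegree.1 hp
  rw [card_sigma, sum_const_nat (m := k) fun v hv => ?_, card_univ_erase_zero]
  convert card_rootChildren_filter_forall_iterate_ne h (mem_erase.1 hv).1
  rw [hdeg, Nat.add_sub_cancel]

theorem card_markedTrees (n k : ℕ) :
    #(markedTrees n k) = #(withRootDegree n k) * (n - k) := by
  rw [markedTrees, card_sigma]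
  refine sum_const_nat fun q hq => ?_
  rw [card_sdiff_of_subset rootChildren_subset, card_univ_erase_zero,
    (mem_withRootDegree.1 hq).2]

theorem card_regraftings_eq_card_markedTrees (n k : ℕ) :
    #(regraftings n k) = #(markedTrees n k) := by
  classical
  refine card_bij' (fun x _ => ⟨update x.1 x.2.2 x.2.1, x.2.2⟩)
    (fun y _ => ⟨update y.1 y.2 0, y.1 y.2, y.2⟩) ?_ ?_ ?_ ?_
  · rintro ⟨p, v, c⟩ hx
    simp only [regraftings, mem_sigma, mem_withRootDegree, mem_erase, mem_filter, mem_univ,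
      and_true] at hx
    obtain ⟨⟨h, hdeg⟩, hv, hc, hvc⟩ := hx
    simp only [markedTrees, mem_sigma, mem_withRootDegree, mem_sdiff, mem_erase, mem_univ,
      and_true, mem_rootChildren, update_self]
    refine ⟨⟨h.update_of_forall_iterate_ne (mem_rootChildren.1 hc).1 hvc, ?_⟩,
      (mem_rootChildren.1 hc).1, fun hc' => hv hc'.2⟩
    rw [rootChildren_update_of_ne_zero hv, card_erase_of_mem hc, hdeg, Nat.add_sub_cancel]
  · rintro ⟨q, u⟩ hy
    simp only [markedTrees, mem_sigma, mem_withRootDegree, mem_sdiff, mem_erase, mem_univ,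
      and_true, mem_rootChildren] at hy
    obtain ⟨⟨h, hdeg⟩, hu, hqu⟩ := hy
    have hqu : q u ≠ 0 := fun h0 => hqu ⟨hu, h0⟩
    simp only [regraftings, mem_sigma, mem_withRootDegree, mem_erase, mem_filter, mem_univ,
      and_true, mem_rootChildren, update_self]
    refine ⟨⟨h.update_zero hu, ?_⟩, hqu, hu, h.iterate_update_zero_ne hu⟩
    rw [rootChildren_update_zero hu,
      card_insert_of_notMem fun hm => hqu (mem_rootChildren.1 hm).2, hdeg]
  · rintro ⟨p, v, c⟩ hx
    simp only [regraftings, mem_sigma, mem_withRootDegree, mem_filter, mem_rootChildren] at hx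
    simp [update_idem, ← hx.2.2.1.2]
  · rintro ⟨q, u⟩ -
    simp [update_idem]

theorem card_withRootDegree_succ_mul (n k : ℕ) :
    #(withRootDegree n (k + 1)) * (n * k) = #(withRootDegree n k) * (n - k) := by
  rw [← card_regraftings, card_regraftings_eq_card_markedTrees, card_markedTrees]

theorem card_withRootDegree {k : ℕ} (hk : 1 ≤ k) (hkn : k ≤ n) :
    #(withRootDegree n k) = (n - 1).choose (k - 1) * n ^ (n - k) := by
  induction hkn using Nat.decreasingInduction with
  | self => rw [withRootDegree_self, card_singleton, Nat.sub_self, pow_zero, Nat.choose_self,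
      mul_one]
  | of_succ k hkn ih =>
    have hchoose : (n - 1).choose k * k = (n - 1).choose (k - 1) * (n - k) := by
      have := Nat.choose_succ_right_eq (n - 1) (k - 1)
      rwa [Nat.sub_add_cancel hk, show n - 1 - (k - 1) = n - k by omega] at this
    have hpow : n ^ (n - (k + 1)) * n = n ^ (n - k) := by
      rw [← pow_succ]
      congr 1
      omega
    refine Nat.eq_of_mul_eq_mul_right (Nat.sub_pos_of_lt hkn) ?_
    rw [← card_withRootDegree_succ_mul, ih (by omega), Nat.add_sub_cancel]
    calc (n - 1).choose k * n ^ (n - (k + 1)) * (n * k)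
        = (n - 1).choose k * k * (n ^ (n - (k + 1)) * n) := by ring
      _ = (n - 1).choose (k - 1) * n ^ (n - k) * (n - k) := by rw [hchoose, hpow]; ring

end RootedTree

theorem card_rooted_trees_root_degree (n k : ℕ) (hk : 1 ≤ k) (hk' : k ≤ n) :
    Nat.card {p : Fin (n + 1) → Fin (n + 1) // IsRootedTree n p ∧
        Nat.card {v : Fin (n + 1) // v ≠ 0 ∧ p v = 0} = k} =
      Nat.choose (n - 1) (k - 1) * n ^ (n - k) := by
  classical
  have hdeg (p : Fin (n + 1) → Fin (n + 1)) :
      Nat.card {v : Fin (n + 1) // v ≠ 0 ∧ p v = 0} = #(RootedTree.rootChildren p) := by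
    rw [Nat.card_eq_fintype_card, Fintype.card_subtype]
    congr 1
    ext
    simp [RootedTree.mem_rootChildren]
  simp_rw [hdeg]
  rw [Nat.card_eq_fintype_card, Fintype.card_subtype, ← RootedTree.card_withRootDegree hk hk']
  simp [RootedTree.withRootDegree]
end

section
/- For r, s ≥ 1, the number of spanning trees of the complete bipartite graph K_{r,s} equals r^(s−1) · s^(r−1). -/
/-!
Rooting a spanning tree at a vertex `ρ` of the first part identifies it with its parent map,
which sends every other vertex to its neighbour on the way to `ρ`. Prüfer's argument, in
bipartite form: prune leaves one at a time, recording the parent of each pruned leaf in one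
word for parents in the first part and in another for parents in the second part. This gives
a word of length `s` over the first part ending in `ρ` and a word of length `r - 1` over the
second, and there are `r ^ (s - 1) * s ^ (r - 1)` such pairs.

Instead of constructing the code and its inverse, note that parent maps and pairs of words
decompose alike along any prescribed leaf `ℓ` (a vertex that is nobody's parent, resp. a
non-root vertex missing from both words): removing `ℓ` leaves an object on one vertex fewer
together with the parent `u` of `ℓ`, and the leaf set changes by adding `ℓ` and removing `u`.
Induction on the vertex set therefore matches the two families leaf set by leaf set.
-/

/-- The complete bipartite graph on `Fin r ⊕ Fin s`: two vertices are adjacent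
iff they lie in different parts. -/
def completeBipartite (r s : ℕ) : SimpleGraph (Fin r ⊕ Fin s) :=
  SimpleGraph.fromRel (fun x y => x.isLeft ≠ y.isLeft)

open Finset Function

theorem Set.EqOn.iterate_of_mapsTo {α : Type*} {f g : α → α} {s : Set α}
    (hf : Set.MapsTo f s s) (h : Set.EqOn f g s) (n : ℕ) : Set.EqOn f^[n] g^[n] s := by
  induction n with
  | zero => exact fun _ _ => rfl
  | succ n ih =>
    intro x hx
    rw [iterate_succ_apply', iterate_succ_apply', ← ih hx, h (hf.iterate n hx)]

def Equiv.subtypeEquivSigmaFiber {α β : Type*} (P : α → Prop) (g : α → β) :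
    {x // P x} ≃ Σ b, {x // P x ∧ g x = b} where
  toFun x := ⟨g x.1, x.1, x.2, rfl⟩
  invFun y := ⟨y.2.1, y.2.2.1⟩
  left_inv _ := rfl
  right_inv := by rintro ⟨b, x, hx, rfl⟩; rfl

def Equiv.subtypeCompEquivSigmaFiber {α β γ : Type*} (P : α → Prop) (g : α → β) (f : β → γ)
    (c : γ) : {x // P x ∧ f (g x) = c} ≃ Σ b : {b // f b = c}, {x // P x ∧ g x = b} where
  toFun x := ⟨⟨g x.1, x.2.2⟩, x.1, x.2.1, rfl⟩
  invFun y := ⟨y.2.1, y.2.2.1, by rw [y.2.2.2]; exact y.1.2⟩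
  left_inv _ := rfl
  right_inv := by rintro ⟨⟨b, hb⟩, x, hx, h⟩; cases h; rfl

variable {V : Type*}

namespace SimpleGraph

def completeBipartiteOf (side : V → Bool) : SimpleGraph V :=
  fromRel fun x y => side x ≠ side y

@[simp] theorem completeBipartiteOf_adj {side : V → Bool} {x y : V} :
    (completeBipartiteOf side).Adj x y ↔ side x ≠ side y := by
  refine ⟨fun ⟨_, h⟩ => h.elim id Ne.symm, fun h => ⟨fun e => h (e ▸ rfl), Or.inl h⟩⟩

theorem Connected.exists_adj_dist_lt {G : SimpleGraph V} (hG : G.Connected) {v w : V}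
    (hv : v ≠ w) : ∃ u, G.Adj v u ∧ G.dist u w < G.dist v w := by
  obtain ⟨W, hW⟩ := hG.exists_walk_length_eq_dist v w
  cases W with
  | nil => exact absurd rfl hv
  | cons h W' => exact ⟨_, h, (dist_le W').trans_lt (by rw [← hW, Walk.length_cons]; omega)⟩

def parentGraph (p : V → V) : SimpleGraph V := fromRel fun v w => p v = w

theorem reachable_parentGraph_iterate (p : V → V) (v : V) (n : ℕ) :
    (parentGraph p).Reachable v (p^[n] v) := by
  induction n with
  | zero => rfl
  | succ n ih =>
    refine ih.trans ?_
    rw [iterate_succ_apply']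
    by_cases h : p^[n] v = p (p^[n] v)
    · rw [← h]
    · exact Adj.reachable ⟨h, Or.inl rfl⟩

end SimpleGraph

namespace Finset

def listsEquivVector (T : Finset V) (n : ℕ) :
    {l : List V // l.length = n ∧ ∀ v ∈ l, v ∈ T} ≃ List.Vector T n where
  toFun l := ⟨l.1.pmap Subtype.mk l.2.2, by simp [l.2.1]⟩
  invFun v := ⟨v.1.map Subtype.val, by simp, fun x hx => by
    obtain ⟨y, -, rfl⟩ := List.mem_map.1 hx; exact y.2⟩
  left_inv l := Subtype.ext (by simp [List.map_pmap])
  right_inv v := Subtype.ext (by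
    dsimp only; rw [List.pmap_map]; exact List.pmap_eq_self.2 fun _ _ => rfl)

theorem natCard_lists (T : Finset V) (n : ℕ) :
    Nat.card {l : List V // l.length = n ∧ ∀ v ∈ l, v ∈ T} = #T ^ n := by
  rw [Nat.card_congr (listsEquivVector T n), Nat.card_eq_fintype_card, card_vector,
    Fintype.card_coe]

theorem natCard_lists_getLast {T : Finset V} {ρ : V} (hρ : ρ ∈ T) (n : ℕ) :
    Nat.card {l : List V // l.length = n ∧ (∀ v ∈ l, v ∈ T) ∧ ∀ v ∈ l.getLast?, v = ρ} =
      #T ^ (n - 1) := by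
  cases n with
  | zero =>
    rw [zero_tsub, pow_zero, Nat.card_eq_one_iff_unique]
    refine ⟨⟨fun x y => Subtype.ext ?_⟩, ⟨⟨[], rfl, by simp, by simp⟩⟩⟩
    rw [List.length_eq_zero_iff.1 x.2.1, List.length_eq_zero_iff.1 y.2.1]
  | succ n =>
    rw [Nat.add_sub_cancel, ← natCard_lists T n]
    refine Nat.card_congr {
      toFun l := ⟨l.1.dropLast, by simp [l.2.1],
        fun v hv => l.2.2.1 v (List.mem_of_mem_dropLast hv)⟩
      invFun l := ⟨l.1 ++ [ρ], by simp [l.2.1],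
        by simpa [or_imp, forall_and, hρ] using l.2.2, by simp⟩
      left_inv l := Subtype.ext ?_
      right_inv l := Subtype.ext (List.dropLast_concat ..) }
    have hne : l.1 ≠ [] := List.ne_nil_of_length_eq_add_one l.2.1
    conv_rhs =>
      rw [← List.dropLast_append_getLast hne, l.2.2.2 _ (List.getLast_mem_getLast? hne)]

end Finset

namespace SimpleGraph

section ParentMap

variable [DecidableEq V]

/-- Parent map of a spanning tree of `G` on `S` rooted at `ρ`, taken to be the identity off
`S \ {ρ}` so that the tree determines it. -/
structure IsParentMap (G : SimpleGraph V) (S : Finset V) (ρ : V) (p : V → V) : Prop where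
  mem_adj : ∀ v ∈ S.erase ρ, p v ∈ S ∧ G.Adj v (p v)
  eq_self : ∀ v ∉ S.erase ρ, p v = v
  reaches : ∀ v ∈ S, ∃ n, p^[n] v = ρ

namespace IsParentMap

variable {G : SimpleGraph V} {S : Finset V} {ρ : V} {p : V → V}

theorem mapsTo (hp : G.IsParentMap S ρ p) : Set.MapsTo p S S := by
  intro v hv
  by_cases hvρ : v = ρ
  · rwa [hp.eq_self v (by simp [hvρ])]
  · exact (hp.mem_adj v (mem_erase.2 ⟨hvρ, hv⟩)).1

theorem root_mem_of_mapsTo (hp : G.IsParentMap S ρ p) {s : Set V} (hs : Set.MapsTo p s s)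
    {v : V} (hvS : v ∈ S) (hvs : v ∈ s) : ρ ∈ s := by
  obtain ⟨n, hn⟩ := hp.reaches v hvS
  exact hn ▸ hs.iterate n hvs

theorem mono {G' : SimpleGraph V} (hp : G.IsParentMap S ρ p) (h : G ≤ G') :
    G'.IsParentMap S ρ p :=
  ⟨fun v hv => ⟨(hp.mem_adj v hv).1, h (hp.mem_adj v hv).2⟩, hp.eq_self, hp.reaches⟩

theorem ne_self (hp : G.IsParentMap S ρ p) {v : V} (hv : v ∈ S.erase ρ) : p v ≠ v :=
  (hp.mem_adj v hv).2.ne.symm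

variable {ℓ u : V}

theorem erase_of_forall_ne (hp : G.IsParentMap S ρ p) (hℓ : ℓ ∈ S.erase ρ)
    (hleaf : ∀ v ∈ S.erase ρ, p v ≠ ℓ) : G.IsParentMap (S.erase ℓ) ρ (update p ℓ ℓ) := by
  have hmaps : Set.MapsTo p (S.erase ℓ : Set V) (S.erase ℓ) := fun v hv => by
    have hvS := mem_of_mem_erase (Finset.mem_coe.1 hv)
    refine mem_erase.2 ⟨?_, hp.mapsTo hvS⟩
    by_cases hvρ : v = ρ
    · rw [hvρ, hp.eq_self ρ (by simp)]; exact (ne_of_mem_erase hℓ).symm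
    · exact hleaf v (mem_erase.2 ⟨hvρ, hvS⟩)
  have heq : Set.EqOn p (update p ℓ ℓ) (S.erase ℓ) := fun v hv =>
    (update_of_ne (ne_of_mem_erase (Finset.mem_coe.1 hv)) _ _).symm
  refine ⟨fun v hv => ?_, fun v hv => ?_, fun v hv => ?_⟩
  · rw [← heq (mem_of_mem_erase hv)]
    exact ⟨hmaps (mem_of_mem_erase hv), (hp.mem_adj v (mem_of_mem_erase
      (by rwa [erase_right_comm] at hv))).2⟩
  · by_cases hvℓ : v = ℓ
    · rw [hvℓ, update_self]
    · rw [update_of_ne hvℓ]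
      exact hp.eq_self v fun h => hv (by rw [erase_right_comm]; exact mem_erase.2 ⟨hvℓ, h⟩)
  · obtain ⟨n, hn⟩ := hp.reaches v (mem_of_mem_erase hv)
    exact ⟨n, (heq.iterate_of_mapsTo hmaps n hv).symm.trans hn⟩

theorem update_of_erase (hp : G.IsParentMap (S.erase ℓ) ρ p) (hℓ : ℓ ∈ S.erase ρ)
    (hu : u ∈ S.erase ℓ) (hadj : G.Adj ℓ u) : G.IsParentMap S ρ (update p ℓ u) := by
  have heq : Set.EqOn p (update p ℓ u) (S.erase ℓ) := fun v hv =>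
    (update_of_ne (ne_of_mem_erase (Finset.mem_coe.1 hv)) _ _).symm
  have hreach : ∀ v ∈ S.erase ℓ, ∃ n, (update p ℓ u)^[n] v = ρ := fun v hv => by
    obtain ⟨n, hn⟩ := hp.reaches v hv
    exact ⟨n, (heq.iterate_of_mapsTo hp.mapsTo n hv).symm.trans hn⟩
  refine ⟨fun v hv => ?_, fun v hv => ?_, fun v hv => ?_⟩
  · by_cases hvℓ : v = ℓ
    · subst hvℓ
      rw [update_self]
      exact ⟨mem_of_mem_erase hu, hadj⟩
    · rw [update_of_ne hvℓ]
      have := hp.mem_adj v (by rw [erase_right_comm]; exact mem_erase.2 ⟨hvℓ, hv⟩)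
      exact ⟨mem_of_mem_erase this.1, this.2⟩
  · have hvℓ : v ≠ ℓ := fun h => hv (h ▸ hℓ)
    rw [update_of_ne hvℓ]
    exact hp.eq_self v fun h => hv (mem_of_mem_erase (by rwa [erase_right_comm] at h))
  · by_cases hvℓ : v = ℓ
    · obtain ⟨n, hn⟩ := hreach u hu
      exact ⟨n + 1, by rw [iterate_succ_apply, hvℓ, update_self, hn]⟩
    · exact hreach v (mem_erase.2 ⟨hvℓ, hv⟩)

end IsParentMap

section SpanningTree

variable [Fintype V] {G : SimpleGraph V} {ρ : V} {p : V → V}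

namespace IsParentMap

theorem mem_erase_of_ne (hp : G.IsParentMap univ ρ p) {v : V} (hv : p v ≠ v) :
    v ∈ univ.erase ρ := by
  by_contra h; exact hv (hp.eq_self v h)

theorem parentGraph_le (hp : G.IsParentMap univ ρ p) : parentGraph p ≤ G := by
  rintro v w ⟨hvw, rfl | rfl⟩
  · exact (hp.mem_adj v (hp.mem_erase_of_ne (Ne.symm hvw))).2
  · exact (hp.mem_adj w (hp.mem_erase_of_ne hvw)).2.symm

theorem connected_parentGraph (hp : G.IsParentMap univ ρ p) : (parentGraph p).Connected := by
  have h v : (parentGraph p).Reachable v ρ := by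
    obtain ⟨n, hn⟩ := hp.reaches v (mem_univ v)
    exact hn ▸ reachable_parentGraph_iterate p v n
  exact (connected_iff _).2 ⟨fun v w => (h v).trans (h w).symm, ⟨ρ⟩⟩

theorem edgeSet_parentGraph (hp : G.IsParentMap univ ρ p) :
    (parentGraph p).edgeSet = (fun v => s(v, p v)) '' {v | v ≠ ρ} := by
  ext e
  induction e using Sym2.ind with | _ a b => ?_
  have key x : x ≠ ρ ↔ p x ≠ x := ⟨fun h => hp.ne_self (by simpa using h),
    fun h => ne_of_mem_erase (hp.mem_erase_of_ne h)⟩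
  simp only [mem_edgeSet, parentGraph, fromRel_adj, Set.mem_image, Set.mem_ofPred_eq,
    Sym2.eq_iff, key]
  grind

theorem natCard_edgeSet_parentGraph_add_one (hp : G.IsParentMap univ ρ p) :
    Nat.card (parentGraph p).edgeSet + 1 = Nat.card V := by
  have hinj : Set.InjOn (fun v => s(v, p v)) {v | v ≠ ρ} := by
    intro v hv w hw h
    rcases Sym2.eq_iff.1 h with ⟨hvw, -⟩ | ⟨hvw, hwv⟩
    · exact hvw
    have hmaps : Set.MapsTo p {v, w} {v, w} := by
      rintro x (rfl | rfl)
      · simp [hwv]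
      · simp [← hvw]
    rcases hp.root_mem_of_mapsTo hmaps (mem_univ v) (Set.mem_insert v _) with h | h
    · exact absurd h.symm hv
    · exact absurd (Set.mem_singleton_iff.1 h).symm hw
  have hcompl : {v | v ≠ ρ} = Set.univ \ {ρ} := by ext; simp
  rw [Nat.card_coe_set_eq, hp.edgeSet_parentGraph, hinj.ncard_image, hcompl,
    Set.ncard_sdiff_singleton_of_mem (Set.mem_univ ρ), Set.ncard_univ]
  have : 0 < Nat.card V := Nat.card_pos_iff.2 ⟨⟨ρ⟩, inferInstance⟩
  omega

theorem isTree_parentGraph (hp : G.IsParentMap univ ρ p) : (parentGraph p).IsTree :=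
  isTree_iff_connected_and_card.2 ⟨hp.connected_parentGraph, hp.natCard_edgeSet_parentGraph_add_one⟩

theorem eq_of_parentGraph_eq {q : V → V} (hp : G.IsParentMap univ ρ p)
    (hq : G.IsParentMap univ ρ q) (h : parentGraph p = parentGraph q) : p = q := by
  -- If `p v ≠ q v`, the edge `s(v, q v)` of the common tree makes `q v` a `p`-child of `v`;
  -- then `p (q v) ≠ q (q v)`, as otherwise `v, q v` would be a `q`-cycle avoiding `ρ`.
  have hmaps : Set.MapsTo q {v | p v ≠ q v} {v | p v ≠ q v} := by
    intro v (hv : p v ≠ q v)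
    have hvρ : v ≠ ρ := by
      rintro rfl; exact hv (by rw [hp.eq_self v (by simp), hq.eq_self v (by simp)])
    have hqv := hq.ne_self (mem_erase.2 ⟨hvρ, mem_univ v⟩)
    have hpqv : p (q v) = v := by
      have : (parentGraph p).Adj v (q v) := h ▸ ⟨hqv.symm, Or.inl rfl⟩
      exact this.2.resolve_left hv
    intro (hqq : p (q v) = q (q v))
    have hmaps' : Set.MapsTo q {v, q v} {v, q v} := by
      rintro x (rfl | rfl)
      · simp
      · simp [← hqq, hpqv]
    rcases hq.root_mem_of_mapsTo hmaps' (mem_univ v) (Set.mem_insert v _) with h' | h'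
    · exact hvρ h'.symm
    · rw [← Set.mem_singleton_iff.1 h', hp.eq_self ρ (by simp)] at hpqv
      exact hvρ hpqv.symm
  funext v
  by_contra hv
  exact hq.root_mem_of_mapsTo hmaps (mem_univ v) hv
    (by rw [hp.eq_self ρ (by simp), hq.eq_self ρ (by simp)])

end IsParentMap

theorem IsTree.exists_isParentMap {T : SimpleGraph V} (hT : T.IsTree) (hle : T ≤ G) (ρ : V) :
    ∃ p, G.IsParentMap univ ρ p ∧ parentGraph p = T := by
  choose! f hfadj hfdist using fun v (hv : v ≠ ρ) => hT.connected.exists_adj_dist_lt hv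
  have hp : T.IsParentMap univ ρ (update f ρ ρ) := by
    refine ⟨fun v hv => ?_, fun v hv => ?_, fun v _ => ?_⟩
    · rw [update_of_ne (ne_of_mem_erase hv)]
      exact ⟨mem_univ _, hfadj v (ne_of_mem_erase hv)⟩
    · rw [show v = ρ by simpa using hv, update_self]
    · induction hn : T.dist v ρ using Nat.strong_induction_on generalizing v with | _ n ih =>
      by_cases hvρ : v = ρ
      · exact ⟨0, hvρ⟩
      obtain ⟨k, hk⟩ := ih _ (hn ▸ hfdist v hvρ) (f v) (mem_univ _) rfl
      exact ⟨k + 1, by rw [iterate_succ_apply, update_of_ne hvρ, hk]⟩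
  exact ⟨_, hp.mono hle, (isTree_iff_minimal_connected.1 hT).eq_of_le hp.connected_parentGraph
    hp.parentGraph_le⟩

theorem card_isTree_le_eq_card_isParentMap (ρ : V) :
    Nat.card {T // T ≤ G ∧ T.IsTree} = Nat.card {p // G.IsParentMap univ ρ p} := by
  refine (Nat.card_eq_of_bijective (fun p => ⟨parentGraph p.1, p.2.parentGraph_le,
    p.2.isTree_parentGraph⟩) ⟨fun p q h => Subtype.ext ?_, fun T => ?_⟩).symm
  · exact p.2.eq_of_parentGraph_eq q.2 (congrArg Subtype.val h)
  · obtain ⟨p, hp, hpT⟩ := T.2.2.exists_isParentMap T.2.1 ρ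
    exact ⟨⟨p, hp⟩, Subtype.ext hpT⟩

end SpanningTree

end ParentMap

end SimpleGraph

namespace Prufer

open SimpleGraph

section Leaves

variable [DecidableEq V] {G : SimpleGraph V} {S : Finset V} {ρ ℓ u : V} {p : V → V}

def leaves (S : Finset V) (ρ : V) (p : V → V) : Finset V := S.erase ρ \ (S.erase ρ).image p

theorem leaves_subset : leaves S ρ p ⊆ S.erase ρ := sdiff_subset

theorem mem_leaves : ℓ ∈ leaves S ρ p ↔ ℓ ∈ S.erase ρ ∧ ∀ v ∈ S.erase ρ, p v ≠ ℓ := by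
  simp [leaves]

theorem leaves_update (hℓ : ℓ ∈ S.erase ρ) (hu : u ≠ ℓ)
    (hp : ∀ v ∈ (S.erase ℓ).erase ρ, p v ≠ ℓ) :
    leaves S ρ (update p ℓ u) = insert ℓ (leaves (S.erase ℓ) ρ p \ {u}) := by
  have himage : (S.erase ρ).image (update p ℓ u) = insert u (((S.erase ℓ).erase ρ).image p) := by
    rw [← insert_erase hℓ, image_insert, update_self, erase_right_comm]
    congr 1
    exact image_congr fun v hv => update_of_ne (ne_of_mem_erase (mem_of_mem_erase hv)) _ _
  ext v
  by_cases hvℓ : v = ℓ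
  · subst hvℓ
    simp only [leaves, himage, mem_sdiff, mem_insert, mem_image, hℓ, true_and]
    grind
  · simp only [leaves, himage, mem_sdiff, mem_insert, mem_image, hvℓ, false_or, mem_erase,
      mem_singleton]
    grind

theorem eq_empty_of_leaves_eq_empty (hp : G.IsParentMap S ρ p) (h : leaves S ρ p = ∅) :
    S.erase ρ = ∅ := by
  have hsub : S.erase ρ ⊆ (S.erase ρ).image p := sdiff_eq_empty_iff_subset.1 h
  have himage : (S.erase ρ).image p = S.erase ρ :=
    (eq_of_subset_of_card_le hsub card_image_le).symm
  refine eq_empty_of_forall_notMem fun v hv => ?_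
  have hmaps : Set.MapsTo p (S.erase ρ : Set V) (S.erase ρ) := fun w hw => by
    rw [← himage]; exact mem_image_of_mem p hw
  simpa using hp.root_mem_of_mapsTo hmaps (mem_of_mem_erase hv) hv

def parentMapsEquivSigma {L : Finset V} (hℓ : ℓ ∈ S.erase ρ) (hℓL : ℓ ∈ L) :
    {p // G.IsParentMap S ρ p ∧ leaves S ρ p = L} ≃
      Σ u : {u // u ∈ S.erase ℓ ∧ G.Adj ℓ u}, {p // G.IsParentMap (S.erase ℓ) ρ p ∧
        insert ℓ (leaves (S.erase ℓ) ρ p \ {u.1}) = L} where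
  toFun p :=
    have hleaf := (mem_leaves.1 (by rw [p.2.2]; exact hℓL)).2
    ⟨⟨p.1 ℓ, mem_erase.2 ⟨p.2.1.ne_self hℓ, (p.2.1.mem_adj ℓ hℓ).1⟩, (p.2.1.mem_adj ℓ hℓ).2⟩,
      update p.1 ℓ ℓ, p.2.1.erase_of_forall_ne hℓ hleaf, by
        rw [← leaves_update hℓ (p.2.1.ne_self hℓ), update_idem, update_eq_self, p.2.2]
        intro v hv
        rw [update_of_ne (ne_of_mem_erase (mem_of_mem_erase hv))]
        exact hleaf v (mem_of_mem_erase (by rwa [erase_right_comm] at hv))⟩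
  invFun x := ⟨update x.2.1 ℓ x.1.1, x.2.2.1.update_of_erase hℓ x.1.2.1 x.1.2.2, by
    rw [leaves_update hℓ (ne_of_mem_erase x.1.2.1), x.2.2.2]
    exact fun v hv => ne_of_mem_erase (x.2.2.1.mem_adj v hv).1⟩
  left_inv p := Subtype.ext (by simp)
  right_inv x := Sigma.subtype_ext (Subtype.ext (update_self ..)) (by
    simp only [update_idem]
    exact update_eq_self_iff.2 (x.2.2.1.eq_self ℓ (by simp)).symm)

end Leaves

variable (side : V → Bool)

def push (u : V) (c : Bool → List V) : Bool → List V :=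
  update c (side u) (u :: c (side u))

variable {side} {c : Bool → List V} {u : V}

theorem mem_push {b : Bool} {v : V} :
    v ∈ push side u c b ↔ (b = side u ∧ v = u) ∨ v ∈ c b := by
  by_cases hb : b = side u
  · subst hb; simp [push]
  · simp [push, hb]

section Codes

variable [DecidableEq V] {S : Finset V} {ρ ℓ : V}

variable (side) in
/-- The words of the bipartite Prüfer code of a tree on `S` rooted at `ρ`: pruning leaves one at
a time, `c b` records the parents lying on side `b` of the pruned leaves, in order. The last
vertex pruned hangs from `ρ`, which is therefore the last letter of `c (side ρ)`; the leaves of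
the tree are the non-root vertices that do not occur in `c` (`missing S ρ c`). -/
structure IsCode (S : Finset V) (ρ : V) (c : Bool → List V) : Prop where
  mem : ∀ b, ∀ v ∈ c b, v ∈ S ∧ side v = b
  length_eq : ∀ b, (c b).length = #{v ∈ S.erase ρ | side v ≠ b}
  getLast?_eq : ∀ v ∈ (c (side ρ)).getLast?, v = ρ

def missing (S : Finset V) (ρ : V) (c : Bool → List V) : Finset V :=
  {v ∈ S.erase ρ | ∀ b, v ∉ c b}

theorem missing_push (hℓ : ℓ ∈ S.erase ρ) (hu : u ≠ ℓ) (hc : ∀ b, ℓ ∉ c b) :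
    missing S ρ (push side u c) = insert ℓ (missing (S.erase ℓ) ρ c \ {u}) := by
  ext v
  simp only [missing, mem_filter, mem_push, mem_insert, mem_sdiff, mem_singleton, mem_erase]
  grind

theorem card_filter_erase_erase (hℓ : ℓ ∈ S.erase ρ) (b : Bool) :
    #{v ∈ (S.erase ℓ).erase ρ | side v ≠ b} + (if side ℓ ≠ b then 1 else 0) =
      #{v ∈ S.erase ρ | side v ≠ b} := by
  rw [erase_right_comm, filter_erase]
  split_ifs with h
  · exact card_erase_add_one (mem_filter.2 ⟨hℓ, h⟩)
  · have : ℓ ∉ {v ∈ S.erase ρ | side v ≠ b} := fun h' => h (mem_filter.1 h').2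
    rw [erase_eq_of_notMem this, add_zero]

namespace IsCode

theorem erase_eq_empty_of_eq_nil (hc : IsCode side S ρ c) (h : c (side ρ) = []) :
    S.erase ρ = ∅ := by
  have hnone : ∀ v ∈ S.erase ρ, side v = side ρ := by
    have := hc.length_eq (side ρ)
    rw [h, List.length_nil, eq_comm, card_eq_zero, filter_eq_empty_iff] at this
    simpa using this
  refine eq_empty_of_forall_notMem fun v hv => ?_
  have hpos : 0 < (c (!side ρ)).length := by
    rw [hc.length_eq]
    exact card_pos.2 ⟨v, mem_filter.2 ⟨hv, by simp [hnone v hv]⟩⟩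
  obtain ⟨x, hx⟩ := List.exists_mem_of_length_pos hpos
  have ⟨hxS, hxside⟩ := hc.mem _ x hx
  have hxρ : x ≠ ρ := by rintro rfl; simp at hxside
  simp [hnone x (mem_erase.2 ⟨hxρ, hxS⟩)] at hxside

theorem push (hc : IsCode side (S.erase ℓ) ρ c) (hℓ : ℓ ∈ S.erase ρ) (hu : u ∈ S.erase ℓ)
    (hside : side ℓ ≠ side u) : IsCode side S ρ (push side u c) := by
  refine ⟨fun b v hv => ?_, fun b => ?_, fun v hv => ?_⟩
  · rcases mem_push.1 hv with ⟨rfl, rfl⟩ | hv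
    · exact ⟨mem_of_mem_erase hu, rfl⟩
    · exact ⟨mem_of_mem_erase (hc.mem b v hv).1, (hc.mem b v hv).2⟩
  · rw [← card_filter_erase_erase hℓ b, ← hc.length_eq b]
    by_cases hb : b = side u
    · subst hb; simp [Prufer.push, hside]
    · have : side ℓ = b := by revert hside hb; cases side ℓ <;> cases side u <;> cases b <;> simp
      simp [Prufer.push, update_of_ne hb, this]
  · by_cases hρ : side u = side ρ
    · rw [Prufer.push, hρ, update_self, List.getLast?_cons] at hv
      cases hlast : (c (side ρ)).getLast? with
      | none =>
        have hS := hc.erase_eq_empty_of_eq_nil (List.getLast?_eq_none_iff.1 hlast)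
        rw [hlast] at hv
        simp only [Option.getD_none, Option.mem_def, Option.some.injEq] at hv
        subst hv
        by_contra hne
        simpa [hS] using mem_erase.2 ⟨hne, hu⟩
      | some w =>
        rw [hlast] at hv
        simp only [Option.getD_some, Option.mem_def, Option.some.injEq] at hv
        exact hv ▸ hc.getLast?_eq w hlast
    · rw [Prufer.push, update_of_ne (Ne.symm hρ)] at hv
      exact hc.getLast?_eq v hv

theorem ne_nil (hc : IsCode side S ρ c) (hℓ : ℓ ∈ S.erase ρ) : c (!side ℓ) ≠ [] := by
  rw [← List.length_pos_iff, hc.length_eq]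
  exact card_pos.2 ⟨ℓ, mem_filter.2 ⟨hℓ, by simp⟩⟩

theorem update_tail (hc : IsCode side S ρ c) (hℓ : ℓ ∈ missing S ρ c) :
    IsCode side (S.erase ℓ) ρ (update c (!side ℓ) (c (!side ℓ)).tail) := by
  obtain ⟨hℓS, hℓc⟩ := mem_filter.1 hℓ
  have hsub : ∀ b, ∀ v ∈ update c (!side ℓ) (c (!side ℓ)).tail b, v ∈ c b := by
    intro b v hv
    by_cases hb : b = !side ℓ
    · subst hb; exact List.mem_of_mem_tail (by simpa using hv)
    · rwa [update_of_ne hb] at hv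
  refine ⟨fun b v hv => ?_, fun b => ?_, fun v hv => ?_⟩
  · have := hc.mem b v (hsub b v hv)
    exact ⟨mem_erase.2 ⟨fun h => hℓc b (h ▸ hsub b v hv), this.1⟩, this.2⟩
  · have := card_filter_erase_erase (side := side) hℓS b
    by_cases hb : b = !side ℓ
    · subst hb
      rw [if_pos (by simp)] at this
      rw [update_self, List.length_tail, hc.length_eq]
      omega
    · have hb' : b = side ℓ := by revert hb; cases b <;> cases side ℓ <;> simp
      rw [update_of_ne hb, hc.length_eq, ← this, hb']
      simp
  · by_cases hρ : side ρ = !side ℓ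
    · rw [hρ, update_self, List.getLast?_tail] at hv
      split_ifs at hv
      · simp at hv
      · exact hc.getLast?_eq v (by rwa [hρ])
    · rw [update_of_ne hρ] at hv
      exact hc.getLast?_eq v hv

theorem length_add_length (hc : IsCode side S ρ c) :
    (c true).length + (c false).length = #(S.erase ρ) := by
  rw [hc.length_eq, hc.length_eq, ← card_filter_add_card_filter_not (s := S.erase ρ)
    (fun v => side v ≠ true)]
  simp

theorem erase_eq_empty_of_missing_eq_empty (hc : IsCode side S ρ c) (hm : missing S ρ c = ∅) :
    S.erase ρ = ∅ := by
  by_contra hne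
  obtain ⟨x, hx⟩ := Option.ne_none_iff_exists'.1
    (mt List.getLast?_eq_none_iff.1 (mt hc.erase_eq_empty_of_eq_nil hne))
  have hρ : ρ ∈ c (side ρ) := by
    have := List.mem_of_getLast? hx
    rwa [hc.getLast?_eq x hx] at this
  have hsub : insert ρ (S.erase ρ) ⊆ (c true ++ c false).toFinset := by
    intro v hv
    rcases mem_insert.1 hv with rfl | hv
    · cases h : side v <;> simp_all
    · have : v ∉ missing S ρ c := hm ▸ notMem_empty v
      simp only [missing, mem_filter, not_and, not_forall, not_not] at this
      obtain ⟨b, hb⟩ := this hv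
      cases b <;> simp [hb]
  have := (card_le_card hsub).trans (List.toFinset_card_le _)
  rw [card_insert_of_notMem (notMem_erase ρ S), List.length_append, hc.length_add_length] at this
  omega

end IsCode

theorem push_head_update_tail (hc : IsCode side S ρ c) {b : Bool} (h : c b ≠ []) :
    push side ((c b).head h) (update c b (c b).tail) = c := by
  have hside : side ((c b).head h) = b := (hc.mem b _ (List.head_mem h)).2
  rw [push, hside, update_idem, update_self, List.cons_head_tail, update_eq_self]

def codesEquivSigma {L : Finset V} (hℓ : ℓ ∈ S.erase ρ) (hℓL : ℓ ∈ L) :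
    {c // IsCode side S ρ c ∧ missing S ρ c = L} ≃
      Σ u : {u // u ∈ S.erase ℓ ∧ (completeBipartiteOf side).Adj ℓ u},
        {c // IsCode side (S.erase ℓ) ρ c ∧ insert ℓ (missing (S.erase ℓ) ρ c \ {u.1}) = L} where
  toFun c :=
    have hmiss : ℓ ∈ missing S ρ c.1 := by rw [c.2.2]; exact hℓL
    have hne := c.2.1.ne_nil hℓ
    have hu := c.2.1.mem _ _ (List.head_mem hne)
    have huℓ : (c.1 (!side ℓ)).head hne ≠ ℓ := fun h =>
      (mem_filter.1 hmiss).2 _ (h ▸ List.head_mem hne)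
    ⟨⟨(c.1 (!side ℓ)).head hne, mem_erase.2 ⟨huℓ, hu.1⟩, by simp [hu.2]⟩,
      update c.1 (!side ℓ) (c.1 (!side ℓ)).tail, c.2.1.update_tail hmiss, by
        have hℓc : ∀ b, ℓ ∉ update c.1 (!side ℓ) (c.1 (!side ℓ)).tail b := fun b h =>
          (ne_of_mem_erase ((c.2.1.update_tail hmiss).mem b ℓ h).1) rfl
        rw [← missing_push hℓ huℓ hℓc,
          push_head_update_tail c.2.1 hne, c.2.2]⟩
  invFun x := ⟨push side x.1.1 x.2.1,
    x.2.2.1.push hℓ x.1.2.1 (completeBipartiteOf_adj.1 x.1.2.2), by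
      rw [missing_push hℓ (ne_of_mem_erase x.1.2.1), x.2.2.2]
      exact fun b h => (ne_of_mem_erase (x.2.2.1.mem b ℓ h).1) rfl⟩
  left_inv c := Subtype.ext (push_head_update_tail c.2.1 _)
  right_inv x := by
    have hside : side x.1.1 = !side ℓ := by
      have := completeBipartiteOf_adj.1 x.1.2.2
      revert this; cases side x.1.1 <;> cases side ℓ <;> simp
    have hpush : push side x.1.1 x.2.1 (!side ℓ) = x.1.1 :: x.2.1 (!side ℓ) := by
      rw [push, hside, update_self]
    refine Sigma.subtype_ext (Subtype.ext ?_) ?_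
    · simp [hpush]
    · simp only [hpush, List.tail_cons]
      rw [push, hside, update_idem, update_eq_self]

theorem nonempty_equiv_of_leaves_eq_missing (hρ : ρ ∈ S) (L : Finset V) :
    Nonempty ({p // (completeBipartiteOf side).IsParentMap S ρ p ∧ leaves S ρ p = L} ≃
      {c // IsCode side S ρ c ∧ missing S ρ c = L}) := by
  induction S using Finset.strongInduction generalizing L with | H S ih =>
  rcases L.eq_empty_or_nonempty with rfl | ⟨ℓ, hℓL⟩
  · by_cases hS : S.erase ρ = ∅
    · exact ⟨{
        toFun _ := ⟨fun _ => [], ⟨by simp, by simp [hS], by simp⟩, by simp [missing, hS]⟩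
        invFun _ := ⟨id, ⟨by simp [hS], fun _ _ => rfl, fun v hv => ⟨0, by
          by_contra h; simpa [hS] using mem_erase.2 ⟨h, hv⟩⟩⟩, by simp [leaves, hS]⟩
        left_inv p := Subtype.ext (funext fun v => (p.2.1.eq_self v (by simp [hS])).symm)
        right_inv c := Subtype.ext (funext fun b =>
          (List.length_eq_zero_iff.1 (by rw [c.2.1.length_eq, hS]; rfl)).symm) }⟩
    · have : IsEmpty {p // (completeBipartiteOf side).IsParentMap S ρ p ∧ leaves S ρ p = ∅} :=
        ⟨fun p => hS (eq_empty_of_leaves_eq_empty p.2.1 p.2.2)⟩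
      have : IsEmpty {c // IsCode side S ρ c ∧ missing S ρ c = ∅} :=
        ⟨fun c => hS (c.2.1.erase_eq_empty_of_missing_eq_empty c.2.2)⟩
      exact ⟨Equiv.equivOfIsEmpty _ _⟩
  by_cases hℓ : ℓ ∈ S.erase ρ
  · have hρ' : ρ ∈ S.erase ℓ := mem_erase.2 ⟨(ne_of_mem_erase hℓ).symm, hρ⟩
    have e L' := (ih _ (erase_ssubset (mem_of_mem_erase hℓ)) hρ' L').some
    exact ⟨(parentMapsEquivSigma hℓ hℓL).trans <| (Equiv.sigmaCongrRight fun u =>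
      (Equiv.subtypeCompEquivSigmaFiber _ _ (fun L' => insert ℓ (L' \ {u.1})) L).trans <|
        (Equiv.sigmaCongrRight fun L' : {L' // insert ℓ (L' \ {u.1}) = L} => e L'.1).trans
          (Equiv.subtypeCompEquivSigmaFiber _ _ _ _).symm).trans (codesEquivSigma hℓ hℓL).symm⟩
  · have : IsEmpty {p // (completeBipartiteOf side).IsParentMap S ρ p ∧ leaves S ρ p = L} :=
      ⟨fun p => hℓ (leaves_subset (p.2.2 ▸ hℓL))⟩
    have : IsEmpty {c // IsCode side S ρ c ∧ missing S ρ c = L} :=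
      ⟨fun c => hℓ (filter_subset _ _ (c.2.2 ▸ hℓL))⟩
    exact ⟨Equiv.equivOfIsEmpty _ _⟩

theorem card_parentMaps_eq_card_codes (hρ : ρ ∈ S) :
    Nat.card {p // (completeBipartiteOf side).IsParentMap S ρ p} =
      Nat.card {c // IsCode side S ρ c} :=
  Nat.card_congr <| (Equiv.subtypeEquivSigmaFiber _ (leaves S ρ)).trans <|
    (Equiv.sigmaCongrRight fun L => (nonempty_equiv_of_leaves_eq_missing hρ L).some).trans
      (Equiv.subtypeEquivSigmaFiber _ (missing S ρ)).symm

theorem card_codes (hρ : ρ ∈ S) :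
    Nat.card {c // IsCode side S ρ c} =
      #{v ∈ S | side v = side ρ} ^ (#{v ∈ S | side v ≠ side ρ} - 1) *
        #{v ∈ S | side v ≠ side ρ} ^ (#{v ∈ S | side v = side ρ} - 1) := by
  let Q (b : Bool) (l : List V) : Prop := l.length = #{v ∈ S.erase ρ | side v ≠ b} ∧
    (∀ v ∈ l, v ∈ {v ∈ S | side v = b}) ∧ (b = side ρ → ∀ v ∈ l.getLast?, v = ρ)
  have hcode c : IsCode side S ρ c ↔ ∀ b, Q b (c b) :=
    ⟨fun hc b => ⟨hc.length_eq b, fun v hv => mem_filter.2 (hc.mem b v hv),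
        fun hb => hb ▸ hc.getLast?_eq⟩,
      fun h => ⟨fun b v hv => mem_filter.1 ((h b).2.1 v hv), fun b => (h b).1, (h _).2.2 rfl⟩⟩
  have hprod (f : Bool → ℕ) : ∏ b, f b = f (side ρ) * f (!side ρ) := by
    cases side ρ <;> simp [mul_comm]
  have hρA : ρ ∈ ({v ∈ S | side v = side ρ} : Finset V) := mem_filter.2 ⟨hρ, rfl⟩
  have hA : #{v ∈ S.erase ρ | side v ≠ !side ρ} = #{v ∈ S | side v = side ρ} - 1 := by
    rw [filter_erase, ← card_erase_of_mem hρA]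
    congr 2; ext v; simp
  have hB : #{v ∈ S.erase ρ | side v ≠ side ρ} = #{v ∈ S | side v ≠ side ρ} := by
    rw [filter_erase, erase_eq_of_notMem (by simp)]
  rw [Nat.card_congr ((Equiv.subtypeEquivRight hcode).trans (Equiv.subtypePiEquivPi (p := Q))),
    Nat.card_pi, hprod]
  congr 1
  · rw [← hB, ← natCard_lists_getLast hρA]
    exact Nat.card_congr (Equiv.subtypeEquivRight fun l => by simp [Q])
  · rw [← hA, ← natCard_lists]
    exact Nat.card_congr (Equiv.subtypeEquivRight fun l => by simp [Q, Bool.eq_not])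

end Codes

end Prufer

theorem card_spanning_trees_bipartite_general (r s : ℕ) (hr : 1 ≤ r) :
    Nat.card {H : SimpleGraph (Fin r ⊕ Fin s) //
        H ≤ completeBipartite r s ∧ H.IsTree} = r ^ (s - 1) * s ^ (r - 1) := by
  let ρ : Fin r ⊕ Fin s := .inl ⟨0, hr⟩
  have hG : completeBipartite r s = SimpleGraph.completeBipartiteOf Sum.isLeft := rfl
  have hA : #{v : Fin r ⊕ Fin s | v.isLeft = ρ.isLeft} = r := by
    rw [card_filter, Fintype.sum_sum_type]; simp [ρ]
  have hB : #{v : Fin r ⊕ Fin s | v.isLeft ≠ ρ.isLeft} = s := by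
    rw [card_filter, Fintype.sum_sum_type]; simp [ρ]
  rw [SimpleGraph.card_isTree_le_eq_card_isParentMap ρ, hG,
    Prufer.card_parentMaps_eq_card_codes (mem_univ ρ), Prufer.card_codes (mem_univ ρ), hA, hB]

theorem card_spanning_trees_bipartite (r s : ℕ) (hr : 1 ≤ r) (hs : 1 ≤ s) :
    Nat.card {H : SimpleGraph (Fin r ⊕ Fin s) //
        H ≤ completeBipartite r s ∧ H.IsTree} = r ^ (s - 1) * s ^ (r - 1) :=
  card_spanning_trees_bipartite_general r s hr
end

section
/- For integers r ≥ 2 and s ≥ 1, the identity ∑_{i=1}^{r−1} ∑_{j=1}^{s} C(r−2, i−1) · C(s−1, j−1) · i^(j−1) · j^(i−1) · (r−i)^(s−j−1) · (s−j)^(r−i−1) = r^(s−1) · s^(r−2) holds, with the convention 0^0 = 1. -/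
open Finset Polynomial

def Lw (a b : ℕ) : ℕ := (a+1)^(b-1) * b^a

def Fs (R : Type*) [CommRing R] (A B : ℕ) (x y : R) : R :=
  ∑ a ∈ range (A+1), ∑ b ∈ range (B+1),
    ((A.choose a * B.choose b * Lw a b : ℕ) : R) *
      (x + ((A-a : ℕ) : R))^(B-b) * (y + ((B-b : ℕ) : R))^(A-a)

def Gs (R : Type*) [CommRing R] (A B : ℕ) (x y : R) : R :=
  (x + (A : R) + 1)^B * (y + (B : R))^A

lemma Fs_map {R S : Type*} [CommRing R] [CommRing S] (f : R →+* S) (A B : ℕ) (x y : R) :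
    f (Fs R A B x y) = Fs S A B (f x) (f y) := by
  simp [Fs, map_sum, map_mul, map_pow, map_add, map_natCast]

lemma Gs_map {R S : Type*} [CommRing R] [CommRing S] (f : R →+* S) (A B : ℕ) (x y : R) :
    f (Gs R A B x y) = Gs S A B (f x) (f y) := by
  simp [Gs, map_mul, map_pow, map_add, map_natCast, map_one]

lemma choose_mul_pow {R : Type*} [CommRing R] (B : ℕ) (x : R) :
    ∑ b ∈ range (B+1), (B.choose b : R) * x^(B-b) = (x+1)^B := by
  rw [add_pow, ← sum_range_reflect]
  refine sum_congr rfl fun b hb => ?_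
  have hb' : b ≤ B := by simpa [Nat.lt_succ_iff] using hb
  have h1 : B + 1 - 1 - b = B - b := by omega
  have h2 : B - (B - b) = b := by omega
  rw [h1, h2, Nat.choose_symm hb']
  ring

lemma Fs_zero_left {R : Type*} [CommRing R] (B : ℕ) (x y : R) :
    Fs R 0 B x y = (x+1)^B := by
  rw [Fs, sum_range_succ, sum_range_zero, zero_add, ← choose_mul_pow B x]
  refine sum_congr rfl fun b hb => ?_
  simp [Lw]

lemma Fs_zero_right {R : Type*} [CommRing R] (A : ℕ) (x y : R) :
    Fs R A 0 x y = y^A := by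
  rw [Fs]
  have : ∀ a ∈ range (A+1),
      (∑ b ∈ range 1, ((A.choose a * Nat.choose 0 b * Lw a b : ℕ) : R) *
        (x + ((A-a : ℕ) : R))^(0-b) * (y + ((0-b : ℕ) : R))^(A-a))
      = if a = 0 then y^A else 0 := by
    intro a ha
    rcases eq_or_ne a 0 with rfl | h
    · simp [Lw]
    · simp [Lw, h, Nat.pos_of_ne_zero h]
  rw [sum_congr rfl this, sum_ite_eq' (range (A+1)) 0]
  simp

lemma core_alt : ∀ n : ℕ, ∀ e : ℕ, e < n →
    ∑ k ∈ range (n+1), (-1:ℤ)^(n-k) * (n.choose k) * (k:ℤ)^e = 0 := by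
  intro n
  induction n with
  | zero => omega
  | succ n ih =>
    intro e he
    rcases Nat.eq_zero_or_pos e with rfl | hepos
    · simp only [pow_zero, mul_one]
      have h := Int.alternating_sum_range_choose_of_ne (Nat.succ_ne_zero n)
      have hc : ∀ k ∈ range (n+1+1), (-1:ℤ)^(n+1-k) * ((n+1).choose k)
          = (-1:ℤ)^(n+1) * ((-1:ℤ)^k * ((n+1).choose k)) := by
        intro k hk
        have hk' : k ≤ n+1 := by simpa [Nat.lt_succ_iff] using hk
        have h2 : (-1:ℤ)^(n+1-k) = (-1:ℤ)^(n+1) * (-1:ℤ)^k := by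
          have h3 : (-1:ℤ)^(n+1) = (-1:ℤ)^(n+1-k) * (-1:ℤ)^k := by
            rw [← pow_add]; congr 1; omega
          rw [h3, mul_assoc, ← pow_add]
          simp [← two_mul, pow_mul]
        rw [h2, mul_assoc]
      rw [sum_congr rfl hc, ← mul_sum, h, mul_zero]
    · obtain ⟨e', rfl⟩ : ∃ e', e = e' + 1 := ⟨e - 1, by omega⟩
      rw [Finset.sum_range_succ']
      simp only [Nat.cast_zero, zero_pow (Nat.succ_ne_zero e'), mul_zero, add_zero]
      have step : ∀ k, (-1:ℤ)^(n-k) * ((n+1).choose (k+1)) * ((k:ℤ)+1)^(e'+1)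
          = ((n:ℤ)+1) * ((-1:ℤ)^(n-k) * (n.choose k) * ((k:ℤ)+1)^e') := by
        intro k
        have hc : (n+1) * (n.choose k) = ((n+1).choose (k+1)) * (k+1) := Nat.add_one_mul_choose_eq n k
        have hcast : ((n:ℤ)+1) * (n.choose k) = ((n+1).choose (k+1)) * ((k:ℤ)+1) := by
          exact_mod_cast congrArg (Nat.cast : ℕ → ℤ) hc
        calc (-1:ℤ)^(n-k) * ((n+1).choose (k+1)) * ((k:ℤ)+1)^(e'+1)
            = (-1:ℤ)^(n-k) * (((n+1).choose (k+1)) * ((k:ℤ)+1)) * ((k:ℤ)+1)^e' := by ring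
          _ = (-1:ℤ)^(n-k) * (((n:ℤ)+1) * (n.choose k)) * ((k:ℤ)+1)^e' := by rw [← hcast]
          _ = ((n:ℤ)+1) * ((-1:ℤ)^(n-k) * (n.choose k) * ((k:ℤ)+1)^e') := by ring
      have hcast2 : ∀ k : ℕ, ((k+1 : ℕ) : ℤ) = (k:ℤ)+1 := by intro k; push_cast; ring
      push_cast
      rw [sum_congr rfl fun k _ => step k, ← mul_sum]
      have inner : ∑ k ∈ range (n+1), (-1:ℤ)^(n-k) * (n.choose k) * ((k:ℤ)+1)^e' = 0 := by
        have expand : ∀ k : ℕ, ((k:ℤ)+1)^e' = ∑ u ∈ range (e'+1), (e'.choose u : ℤ) * (k:ℤ)^u := by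
          intro k
          rw [add_pow]
          exact sum_congr rfl fun u hu => by ring
        calc ∑ k ∈ range (n+1), (-1:ℤ)^(n-k) * (n.choose k) * ((k:ℤ)+1)^e'
            = ∑ k ∈ range (n+1), ∑ u ∈ range (e'+1),
                (e'.choose u : ℤ) * ((-1:ℤ)^(n-k) * (n.choose k) * (k:ℤ)^u) := by
              refine sum_congr rfl fun k hk => ?_
              rw [expand k, mul_sum]
              exact sum_congr rfl fun u hu => by ring
          _ = ∑ u ∈ range (e'+1), (e'.choose u : ℤ) *
                ∑ k ∈ range (n+1), (-1:ℤ)^(n-k) * (n.choose k) * (k:ℤ)^u := by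
              rw [sum_comm]
              exact sum_congr rfl fun u hu => by rw [mul_sum]
          _ = 0 := by
              refine sum_eq_zero fun u hu => ?_
              have hu' : u < n := by
                have := mem_range.mp hu; omega
              rw [ih u hu', mul_zero]
      rw [inner, mul_zero]

lemma alt_shift (n d : ℕ) (h : d < n) (c : ℤ) :
    ∑ k ∈ range (n+1), (-1:ℤ)^(n-k) * (n.choose k) * ((k:ℤ)+c)^d = 0 := by
  have expand : ∀ k : ℕ, ((k:ℤ)+c)^d = ∑ u ∈ range (d+1), (d.choose u : ℤ) * c^(d-u) * (k:ℤ)^u := by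
    intro k
    rw [add_pow]
    exact sum_congr rfl fun u hu => by ring
  calc ∑ k ∈ range (n+1), (-1:ℤ)^(n-k) * (n.choose k) * ((k:ℤ)+c)^d
      = ∑ k ∈ range (n+1), ∑ u ∈ range (d+1),
          (d.choose u : ℤ) * c^(d-u) * ((-1:ℤ)^(n-k) * (n.choose k) * (k:ℤ)^u) := by
        refine sum_congr rfl fun k hk => ?_
        rw [expand k, mul_sum]
        exact sum_congr rfl fun u hu => by ring
    _ = ∑ u ∈ range (d+1), (d.choose u : ℤ) * c^(d-u) *
          ∑ k ∈ range (n+1), (-1:ℤ)^(n-k) * (n.choose k) * (k:ℤ)^u := by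
        rw [sum_comm]
        exact sum_congr rfl fun u hu => by rw [mul_sum]
    _ = 0 := by
        refine sum_eq_zero fun u hu => ?_
        have hu' : u < n := by have := mem_range.mp hu; omega
        rw [core_alt n u hu', mul_zero]

lemma ZL (A B : ℕ) (hA : 1 ≤ A) (hB : 1 ≤ B) :
    Fs ℤ A B (-(A:ℤ)-1) (-(B:ℤ)) = 0 := by
  have key : ∀ a ∈ range (A+1), ∀ b ∈ range (B+1),
      ((A.choose a * B.choose b * Lw a b : ℕ) : ℤ) *
        ((-(A:ℤ)-1) + ((A-a : ℕ) : ℤ))^(B-b) * ((-(B:ℤ)) + ((B-b : ℕ) : ℤ))^(A-a)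
      = ((-1:ℤ)^(A-a) * (A.choose a) * ((a:ℤ)+1)^(B-1)) *
        ((-1:ℤ)^(B-b) * (B.choose b) * (b:ℤ)^A) := by
    intro a ha b hb
    have haA : a ≤ A := by simpa [Nat.lt_succ_iff] using ha
    have hbB : b ≤ B := by simpa [Nat.lt_succ_iff] using hb
    have hx : (-(A:ℤ)-1) + ((A-a : ℕ) : ℤ) = -((a:ℤ)+1) := by
      push_cast [Nat.cast_sub haA]; ring
    have hy : (-(B:ℤ)) + ((B-b : ℕ) : ℤ) = -(b:ℤ) := by
      push_cast [Nat.cast_sub hbB]; ring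
    rw [hx, hy, neg_pow, neg_pow]
    rcases Nat.eq_zero_or_pos b with rfl | hbpos
    · rcases Nat.eq_zero_or_pos a with rfl | hapos
      · simp [Lw, zero_pow (show A ≠ 0 by omega)]
      · simp [Lw, zero_pow (show a ≠ 0 by omega), zero_pow (show A ≠ 0 by omega)]
    · have e1 : (b-1) + (B-b) = B-1 := by omega
      have e2 : a + (A-a) = A := by omega
      have : ((a:ℤ)+1)^(B-1) = ((a:ℤ)+1)^(b-1) * ((a:ℤ)+1)^(B-b) := by
        rw [← pow_add, e1]
      rw [this]
      have : ((b:ℤ))^A = ((b:ℤ))^a * ((b:ℤ))^(A-a) := by rw [← pow_add, e2]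
      rw [this, Lw]
      push_cast
      ring
  rw [Fs, sum_congr rfl fun a ha => sum_congr rfl fun b hb => key a ha b hb,
    ← sum_mul_sum]
  rcases le_or_gt B A with h | h
  · have h1 : B - 1 < A := by omega
    have := alt_shift A (B-1) h1 1
    rw [this, zero_mul]
  · have : ∑ b ∈ range (B+1), (-1:ℤ)^(B-b) * (B.choose b) * (b:ℤ)^A = 0 := by
      have := alt_shift B A h 0
      simpa using this
    rw [this, mul_zero]

lemma deriv_term {R : Type*} [CommRing R] (N c d e m : ℕ) (y₀ : R) :
    derivative ((N : R[X]) * (X + (c : R[X]))^m * (C y₀ + (d : R[X]))^e)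
      = (N : R[X]) * ((m : R[X]) * (X + (c : R[X]))^(m-1)) * (C y₀ + (d : R[X]))^e := by
  simp only [← C_eq_natCast]
  simp only [derivative_mul, derivative_C, derivative_pow, derivative_add, derivative_X, zero_mul,
    mul_zero, add_zero, zero_add, mul_one, derivative_C_mul]

lemma choose_mul_sub (n k : ℕ) (h : 1 ≤ n) :
    n.choose k * (n - k) = n * (n-1).choose k := by
  have h1 : n.choose (k+1) * (k+1) = n.choose k * (n - k) := Nat.choose_succ_right_eq n k
  have h2 : ((n-1)+1) * ((n-1).choose k) = ((n-1)+1).choose (k+1) * (k+1) :=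
    Nat.add_one_mul_choose_eq (n-1) k
  have h3 : (n-1)+1 = n := by omega
  rw [h3] at h2
  exact (h2.trans h1).symm

lemma Fs_deriv_x {R : Type*} [CommRing R] (A B : ℕ) (hB : 1 ≤ B) (y₀ : R) :
    derivative (Fs (Polynomial R) A B X (C y₀)) =
      (B : Polynomial R) * Fs (Polynomial R) A (B-1) X (C y₀ + 1) := by
  rw [Fs, Fs, derivative_sum, mul_sum]
  refine sum_congr rfl fun a ha => ?_
  rw [derivative_sum, mul_sum]
  have hB1 : (B-1)+1 = B := by omega
  rw [hB1, sum_range_succ]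
  have hlast : derivative (((A.choose a * B.choose B * Lw a B : ℕ) : R[X]) *
      (X + ((A-a : ℕ) : R[X]))^(B-B) * (C y₀ + ((B-B : ℕ) : R[X]))^(A-a)) = 0 := by
    rw [deriv_term]
    simp
  rw [hlast, add_zero]
  refine sum_congr rfl fun b hb => ?_
  have hbB : b ≤ B - 1 := by have := mem_range.mp hb; omega
  rw [deriv_term]
  have hnat : (A.choose a * B.choose b * Lw a b) * (B-b) = B * (A.choose a * (B-1).choose b * Lw a b) := by
    have := choose_mul_sub B b hB
    calc A.choose a * B.choose b * Lw a b * (B-b)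
        = (B.choose b * (B - b)) * (A.choose a * Lw a b) := by ring
      _ = (B * (B-1).choose b) * (A.choose a * Lw a b) := by rw [this]
      _ = B * (A.choose a * (B-1).choose b * Lw a b) := by ring
  have hc1 : ((B-b : ℕ) : R[X]) = ((B-1-b : ℕ) : R[X]) + 1 := by
    have : B - b = (B-1-b) + 1 := by omega
    rw [this]; push_cast; ring
  have hexp : B - b - 1 = B - 1 - b := by omega
  rw [hexp, hc1]
  have hc2 : (C y₀ + (((B-1-b : ℕ) : R[X]) + 1)) = (C y₀ + 1 + ((B-1-b : ℕ) : R[X])) := by ring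
  rw [hc2]
  calc ((A.choose a * B.choose b * Lw a b : ℕ) : R[X]) *
        ((((B-1-b : ℕ) : R[X]) + 1) * (X + ((A-a : ℕ) : R[X]))^(B-1-b)) *
        (C y₀ + 1 + ((B-1-b : ℕ) : R[X]))^(A-a)
      = (((A.choose a * B.choose b * Lw a b) * (B-b) : ℕ) : R[X]) *
        (X + ((A-a : ℕ) : R[X]))^(B-1-b) * (C y₀ + 1 + ((B-1-b : ℕ) : R[X]))^(A-a) := by
        rw [← hc1]; push_cast; ring
    _ = ((B * (A.choose a * (B-1).choose b * Lw a b) : ℕ) : R[X]) *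
        (X + ((A-a : ℕ) : R[X]))^(B-1-b) * (C y₀ + 1 + ((B-1-b : ℕ) : R[X]))^(A-a) := by
        rw [hnat]
    _ = (B : R[X]) * (((A.choose a * (B-1).choose b * Lw a b : ℕ) : R[X]) *
        (X + ((A-a : ℕ) : R[X]))^(B-1-b) * (C y₀ + 1 + ((B-1-b : ℕ) : R[X]))^(A-a)) := by
        push_cast; ring

lemma deriv_term_y {R : Type*} [CommRing R] (N c d e m : ℕ) (x₀ : R) :
    derivative ((N : R[X]) * (C x₀ + (c : R[X]))^m * (X + (d : R[X]))^e)
      = (N : R[X]) * (C x₀ + (c : R[X]))^m * ((e : R[X]) * (X + (d : R[X]))^(e-1)) := by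
  simp only [← C_eq_natCast]
  simp only [derivative_mul, derivative_C, derivative_pow, derivative_add, derivative_X, zero_mul,
    mul_zero, add_zero, zero_add, mul_one, derivative_C_mul]

lemma Fs_deriv_y {R : Type*} [CommRing R] (A B : ℕ) (hA : 1 ≤ A) (x₀ : R) :
    derivative (Fs (Polynomial R) A B (C x₀) X) =
      (A : Polynomial R) * Fs (Polynomial R) (A-1) B (C x₀ + 1) X := by
  rw [Fs, Fs, derivative_sum, mul_sum]
  have hA1 : (A-1)+1 = A := by omega
  rw [hA1, sum_range_succ]
  have hlast : derivative (∑ b ∈ range (B+1), ((A.choose A * B.choose b * Lw A b : ℕ) : R[X]) *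
      (C x₀ + ((A-A : ℕ) : R[X]))^(B-b) * (X + ((B-b : ℕ) : R[X]))^(A-A)) = 0 := by
    rw [derivative_sum]
    refine sum_eq_zero fun b hb => ?_
    rw [deriv_term_y]
    simp
  rw [hlast, add_zero]
  refine sum_congr rfl fun a ha => ?_
  rw [derivative_sum, mul_sum]
  refine sum_congr rfl fun b hb => ?_
  rw [deriv_term_y]
  have haA : a ≤ A - 1 := by have := mem_range.mp ha; omega
  have hnat : (A.choose a * B.choose b * Lw a b) * (A-a) = A * ((A-1).choose a * B.choose b * Lw a b) := by
    have h := choose_mul_sub A a hA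
    calc A.choose a * B.choose b * Lw a b * (A-a)
        = (A.choose a * (A - a)) * (B.choose b * Lw a b) := by ring
      _ = (A * (A-1).choose a) * (B.choose b * Lw a b) := by rw [h]
      _ = A * ((A-1).choose a * B.choose b * Lw a b) := by ring
  have hc1 : ((A-a : ℕ) : R[X]) = ((A-1-a : ℕ) : R[X]) + 1 := by
    have : A - a = (A-1-a) + 1 := by omega
    rw [this]; push_cast; ring
  have hexp : A - a - 1 = A - 1 - a := by omega
  rw [hexp, hc1]
  have hc2 : (C x₀ + (((A-1-a : ℕ) : R[X]) + 1)) = (C x₀ + 1 + ((A-1-a : ℕ) : R[X])) := by ring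
  rw [hc2]
  calc ((A.choose a * B.choose b * Lw a b : ℕ) : R[X]) *
        (C x₀ + 1 + ((A-1-a : ℕ) : R[X]))^(B-b) *
        ((((A-1-a : ℕ) : R[X]) + 1) * (X + ((B-b : ℕ) : R[X]))^(A-1-a))
      = (((A.choose a * B.choose b * Lw a b) * (A-a) : ℕ) : R[X]) *
        (C x₀ + 1 + ((A-1-a : ℕ) : R[X]))^(B-b) * (X + ((B-b : ℕ) : R[X]))^(A-1-a) := by
        rw [← hc1]; push_cast; ring
    _ = ((A * ((A-1).choose a * B.choose b * Lw a b) : ℕ) : R[X]) *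
        (C x₀ + 1 + ((A-1-a : ℕ) : R[X]))^(B-b) * (X + ((B-b : ℕ) : R[X]))^(A-1-a) := by
        rw [hnat]
    _ = (A : R[X]) * ((((A-1).choose a * B.choose b * Lw a b : ℕ) : R[X]) *
        (C x₀ + 1 + ((A-1-a : ℕ) : R[X]))^(B-b) * (X + ((B-b : ℕ) : R[X]))^(A-1-a)) := by
        push_cast; ring

lemma Gs_deriv_y {R : Type*} [CommRing R] (A B : ℕ) (hA : 1 ≤ A) (x₀ : R) :
    derivative (Gs (Polynomial R) A B (C x₀) X) =
      (A : Polynomial R) * Gs (Polynomial R) (A-1) B (C x₀ + 1) X := by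
  have e1 : (C x₀ + (A : R[X]) + 1) = C (x₀ + (A:R) + 1) := by
    simp [C_add]
  have e2 : (C x₀ + 1 + ((A-1 : ℕ) : R[X]) + 1) = C (x₀ + (A:R) + 1) := by
    have h : ((A-1 : ℕ) : R[X]) = (A : R[X]) - 1 := by
      push_cast [Nat.cast_sub hA]; ring
    rw [h]
    simp [C_add]
  rw [Gs, Gs, e1, e2]
  have e3 : (X + (B : R[X])) = X + C ((B:R)) := by simp [C_eq_natCast]
  rw [e3, ← C_pow, derivative_C_mul, derivative_X_add_C_pow, C_pow, C_eq_natCast]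
  ring

theorem master : ∀ (n A B : ℕ), A + B ≤ n → ∀ (R : Type) [CommRing R] (x y : R),
    Fs R A B x y = Gs R A B x y := by
  intro n
  induction n with
  | zero =>
    intro A B h R _ x y
    obtain ⟨rfl, rfl⟩ : A = 0 ∧ B = 0 := by omega
    rw [Fs_zero_right, Gs]
    simp
  | succ n ih =>
    intro A B h R _ x y
    rcases Nat.eq_zero_or_pos A with rfl | hA
    · rw [Fs_zero_left, Gs]; simp
    rcases Nat.eq_zero_or_pos B with rfl | hB
    · rw [Fs_zero_right, Gs]; simp
    -- Stage 1
    have st1 : ∀ (R : Type) [CommRing R] (x : R), Fs R A B x (-(B:R)) = 0 := by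
      intro R _ x
      have hZX : Fs (Polynomial ℤ) A B X (C (-(B:ℤ))) = 0 := by
        have hder : derivative (Fs (Polynomial ℤ) A B X (C (-(B:ℤ)))) = 0 := by
          rw [Fs_deriv_x A B hB (-(B:ℤ)),
            ih A (B-1) (by omega) (Polynomial ℤ) X (C (-(B:ℤ)) + 1)]
          have hz : (C (-(B:ℤ)) + 1 + (((B-1) : ℕ) : Polynomial ℤ)) = 0 := by
            have hc : (((B-1) : ℕ) : Polynomial ℤ) = (B : Polynomial ℤ) - 1 := by
              push_cast [Nat.cast_sub hB]; ring
            rw [hc]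
            simp [map_neg]
          rw [Gs, hz, zero_pow (by omega : A ≠ 0), mul_zero, mul_zero]
        have hC := Polynomial.eq_C_of_derivative_eq_zero hder
        have hev : (Fs (Polynomial ℤ) A B X (C (-(B:ℤ)))).eval (-(A:ℤ)-1)
            = Fs ℤ A B (-(A:ℤ)-1) (-(B:ℤ)) := by
          have h2 := Fs_map (Polynomial.evalRingHom (-(A:ℤ)-1)) A B X (C (-(B:ℤ)))
          simpa using h2
        have h0 : (Fs (Polynomial ℤ) A B X (C (-(B:ℤ)))).coeff 0 = 0 := by
          have h3 := hev
          rw [hC] at h3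
          simpa [ZL A B hA hB] using h3
        rw [hC, h0, map_zero]
      have h4 := Fs_map (Polynomial.eval₂RingHom (Int.castRingHom R) x) A B X (C (-(B:ℤ)))
      rw [hZX, map_zero] at h4
      have h5 : (Polynomial.eval₂RingHom (Int.castRingHom R) x) X = x := by simp
      have h6 : (Polynomial.eval₂RingHom (Int.castRingHom R) x) (C (-(B:ℤ))) = -(B:R) := by
        simp
      rw [h5, h6] at h4
      exact h4.symm
    -- Stage 2 : at generators of (ℤ[X])[Y]
    have key : Fs (Polynomial (Polynomial ℤ)) A B (C X) X
        = Gs (Polynomial (Polynomial ℤ)) A B (C X) X := by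
      have hder : derivative (Fs (Polynomial (Polynomial ℤ)) A B (C X) X
          - Gs (Polynomial (Polynomial ℤ)) A B (C X) X) = 0 := by
        rw [derivative_sub, Fs_deriv_y A B hA X, Gs_deriv_y A B hA X,
          ih (A-1) B (by omega) (Polynomial (Polynomial ℤ)) (C X + 1) X, sub_self]
      have hC := Polynomial.eq_C_of_derivative_eq_zero hder
      have hev := congrArg (Polynomial.eval (-(B:Polynomial ℤ))) hC
      have e1 : (Fs (Polynomial (Polynomial ℤ)) A B (C X) X
          - Gs (Polynomial (Polynomial ℤ)) A B (C X) X).eval (-(B:Polynomial ℤ))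
          = Fs (Polynomial ℤ) A B X (-(B:Polynomial ℤ))
            - Gs (Polynomial ℤ) A B X (-(B:Polynomial ℤ)) := by
        have hf := Fs_map (Polynomial.evalRingHom (-(B:Polynomial ℤ))) A B (C X) X
        have hg := Gs_map (Polynomial.evalRingHom (-(B:Polynomial ℤ))) A B (C X) X
        simp only [eval_sub]
        simp only [Polynomial.coe_evalRingHom] at hf hg
        rw [hf, hg]
        simp
      have e2 : Gs (Polynomial ℤ) A B X (-(B:Polynomial ℤ)) = 0 := by
        rw [Gs]
        have : (-(B:Polynomial ℤ) + (B : Polynomial ℤ)) = 0 := by ring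
        rw [this, zero_pow (by omega : A ≠ 0), mul_zero]
      rw [e1, st1 (Polynomial ℤ) X, e2, sub_zero] at hev
      have : (Fs (Polynomial (Polynomial ℤ)) A B (C X) X
          - Gs (Polynomial (Polynomial ℤ)) A B (C X) X).coeff 0 = 0 := by
        rw [hC] at hev ⊢
        simpa using hev.symm
      have h7 := hC
      rw [this, map_zero] at h7
      exact sub_eq_zero.mp h7
    -- transport
    have h8 := Fs_map (Polynomial.eval₂RingHom (Polynomial.eval₂RingHom (Int.castRingHom R) x) y) A B (C X) X
    have h9 := Gs_map (Polynomial.eval₂RingHom (Polynomial.eval₂RingHom (Int.castRingHom R) x) y) A B (C X) X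
    rw [key] at h8
    have h10 : (Polynomial.eval₂RingHom (Polynomial.eval₂RingHom (Int.castRingHom R) x) y) (C X) = x := by
      simp
    have h11 : (Polynomial.eval₂RingHom (Polynomial.eval₂RingHom (Int.castRingHom R) x) y) X = y := by
      simp
    rw [h10, h11] at h8 h9
    rw [← h8, ← h9]

lemma natver (A B : ℕ) :
    ∑ a ∈ range (A+1), ∑ b ∈ range (B+1),
      A.choose a * B.choose b * Lw a b * (1+(A-a))^(B-b) * (1+(B-b))^(A-a)
    = (A+2)^B * (B+1)^A := by
  have hM := master (A+B) A B le_rfl ℤ 1 1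
  rw [Fs, Gs] at hM
  have hL : ((∑ a ∈ range (A+1), ∑ b ∈ range (B+1),
      A.choose a * B.choose b * Lw a b * (1+(A-a))^(B-b) * (1+(B-b))^(A-a) : ℕ) : ℤ)
      = ∑ a ∈ range (A+1), ∑ b ∈ range (B+1),
      ((A.choose a * B.choose b * Lw a b : ℕ) : ℤ) *
        ((1:ℤ) + ((A-a : ℕ) : ℤ))^(B-b) * ((1:ℤ) + ((B-b : ℕ) : ℤ))^(A-a) := by
    push_cast
    ring_nf
  have hR : (((A+2)^B * (B+1)^A : ℕ) : ℤ) = ((1:ℤ) + (A:ℤ) + 1)^B * ((1:ℤ) + (B:ℤ))^A := by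
    push_cast
    ring_nf
  have := hL.trans (hM.trans hR.symm)
  exact_mod_cast this

theorem bipartite_forest_identity (r s : ℕ) (hr : 2 ≤ r) (hs : 1 ≤ s) :
    ∑ i ∈ Finset.Icc 1 (r - 1), ∑ j ∈ Finset.Icc 1 s,
        Nat.choose (r - 2) (i - 1) * Nat.choose (s - 1) (j - 1) *
          i ^ (j - 1) * j ^ (i - 1) * (r - i) ^ (s - j - 1) * (s - j) ^ (r - i - 1) =
      r ^ (s - 1) * s ^ (r - 2) := by
  set A := r - 2 with hA
  set B := s - 1 with hB
  have hrA : r = A + 2 := by omega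
  have hsB : s = B + 1 := by omega
  -- convert Icc to range
  have e1 : ∑ i ∈ Finset.Icc 1 (r - 1), ∑ j ∈ Finset.Icc 1 s,
        Nat.choose (r - 2) (i - 1) * Nat.choose (s - 1) (j - 1) *
          i ^ (j - 1) * j ^ (i - 1) * (r - i) ^ (s - j - 1) * (s - j) ^ (r - i - 1)
      = ∑ a ∈ range (A+1), ∑ b ∈ range (B+1),
        A.choose a * B.choose b * (a+1)^b * (b+1)^a * (A+1-a)^(B-b-1) * (B-b)^(A-a) := by
    rw [← Finset.Ico_add_one_right_eq_Icc, Finset.sum_Ico_eq_sum_range]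
    have hr1 : r - 1 + 1 - 1 = A + 1 := by omega
    rw [hr1]
    refine sum_congr rfl fun a ha => ?_
    rw [← Finset.Ico_add_one_right_eq_Icc, Finset.sum_Ico_eq_sum_range]
    have hs1 : s + 1 - 1 = B + 1 := by omega
    rw [hs1]
    refine sum_congr rfl fun b hb => ?_
    have ha' : a ≤ A := by have := mem_range.mp ha; omega
    have hb' : b ≤ B := by have := mem_range.mp hb; omega
    have c1 : 1 + a - 1 = a := by omega
    have c2 : 1 + b - 1 = b := by omega
    have c3 : r - (1+a) = A + 1 - a := by omega
    have c4 : s - (1+b) - 1 = B - b - 1 := by omega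
    have c5 : s - (1+b) = B - b := by omega
    have c6 : r - (1+a) - 1 = A - a := by omega
    rw [c1, c2, c4, c6, c3, c5, ← hA, ← hB, add_comm 1 a, add_comm 1 b]
  rw [e1]
  -- reflect
  have e2 : ∑ a ∈ range (A+1), ∑ b ∈ range (B+1),
        A.choose a * B.choose b * (a+1)^b * (b+1)^a * (A+1-a)^(B-b-1) * (B-b)^(A-a)
      = ∑ a ∈ range (A+1), ∑ b ∈ range (B+1),
        A.choose a * B.choose b * Lw a b * (1+(A-a))^(B-b) * (1+(B-b))^(A-a) := by
    rw [← sum_range_reflect]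
    refine sum_congr rfl fun a ha => ?_
    rw [← sum_range_reflect]
    refine sum_congr rfl fun b hb => ?_
    have ha' : a ≤ A := by have := mem_range.mp ha; omega
    have hb' : b ≤ B := by have := mem_range.mp hb; omega
    have d0 : A + 1 - 1 - a = A - a := by omega
    have d00 : B + 1 - 1 - b = B - b := by omega
    rw [d0, d00]
    rw [Nat.choose_symm ha', Nat.choose_symm hb',
      show A+1-(A-a) = a+1 by omega, show B-(B-b)-1 = b-1 by omega,
      show B-(B-b) = b by omega, show A-(A-a) = a by omega, Lw]
    ring
  rw [e2, natver A B]
  have : (A+2)^B * (B+1)^A = r ^ (s-1) * s ^ (r-2) := by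
    rw [← hrA, ← hsB, hB, hA]
  rw [this]
end
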